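/- arXiv:1505.02926 — 6 statements merged into one kernel-verified Lean document; each statement's English description precedes it below -/
import Mathlib

section
/- Let f : [a,b] → ℝ be a bounded variation (càdlàg) function and g : [a,b] → ℝ be a càdlàg function. Then the deterministic forward integral ∫_{[a,b]} g(s) d⁻f(s), defined as the limit as ε → 0⁺ of ∫_ℝ g_J(s) (f_{J̄}(s+ε) − f_{J̄}(s))/ε ds, exists and equals the Lebesgue–Stieltjes integral g(a)f(a) + ∫_{]a,b]} g(s⁻) df(s). -/
/-!
For a finite measure `μ` on `ℝ` and a bounded measurable `φ`, Fubini on the strip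
`{(s, x) | s < x ≤ s + ε}` turns `ε⁻¹ ∫ φ(s) μ(]s, s + ε]) ds` into `∫ ε⁻¹ ∫_{x-ε}^x φ dμ(x)`.
The inner averages are bounded and tend to `φ(x⁻)` by the fundamental theorem of calculus, so by
dominated convergence the forward quotients converge to `∫ φ(x⁻) dμ(x)`.
The function `f_{J̄}` is the distribution function of
`df₁|_{]a,b]} - df₂|_{]a,b]} + f(a) δ_a`, and `g_J` is bounded, measurable, with left limits
`g(a)` at `a` and `g(s⁻)` on `]a, b]`; applied to these three measures, the first step gives
the result, the Dirac mass at `a` contributing `g(a) f(a)`.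
-/

open MeasureTheory Filter Topology Set Bornology

theorem measurable_of_continuousWithinAt_Ici {β : Type*} [TopologicalSpace β]
    [TopologicalSpace.PseudoMetrizableSpace β] [MeasurableSpace β] [BorelSpace β] {φ : ℝ → β}
    (hφ : ∀ x, ContinuousWithinAt φ (Ici x) x) : Measurable φ := by
  set r : ℕ → ℝ → ℝ := fun n x => ⌈x * (n + 1)⌉ / (n + 1)
  refine measurable_of_tendsto_metrizable (f := fun n x => φ (r n x)) (fun n => ?_)
    (tendsto_pi_nhds.2 fun x => ?_)
  · exact (measurable_of_countable fun k : ℤ => φ (k / (n + 1))).comp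
      (Int.measurable_ceil.comp (measurable_id.mul_const _))
  have hle : ∀ n : ℕ, x ≤ r n x := fun n => by
    rw [le_div_iff₀ (by positivity)]
    exact Int.le_ceil _
  have hge : ∀ n : ℕ, r n x ≤ x + 1 / (n + 1) := fun n => by
    rw [div_le_iff₀ (by positivity), add_mul, one_div_mul_cancel (by positivity)]
    exact (Int.ceil_lt_add_one _).le
  have hr : Tendsto (fun n => r n x) atTop (𝓝 x) :=
    tendsto_of_tendsto_of_tendsto_of_le_of_le tendsto_const_nhds
      (by simpa using tendsto_one_div_add_atTop_nhds_zero_nat.const_add x) hle hge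
  exact (hφ x).tendsto.comp
    (tendsto_nhdsWithin_of_tendsto_nhds_of_eventually_within _ hr (.of_forall hle))

theorem isBounded_image_Icc_of_tendsto_nhdsGE_nhdsLT {g : ℝ → ℝ} {a b : ℝ}
    (hright : ∀ x ∈ Ico a b, ∃ c, Tendsto g (𝓝[≥] x) (𝓝 c))
    (hleft : ∀ x ∈ Ioc a b, ∃ c, Tendsto g (𝓝[<] x) (𝓝 c)) :
    IsBounded (g '' Icc a b) := by
  refine isCompact_Icc.induction_on (p := fun t => IsBounded (g '' t)) (by simp)
    (fun s t hst ht => ht.subset (image_mono hst))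
    (fun s t hs ht => by rw [image_union]; exact hs.union ht) fun x hx => ?_
  have hl : ∃ t ∈ 𝓝[Icc a b ∩ Iio x] x, IsBounded (g '' t) := by
    rcases eq_or_lt_of_le hx.1 with hxa | hax
    · refine ⟨_, self_mem_nhdsWithin, ?_⟩
      rw [eq_empty_of_forall_notMem fun y (hy : y ∈ Icc a b ∩ Iio x) =>
        hy.2.not_ge (hxa ▸ hy.1.1), image_empty]
      exact isBounded_empty
    · obtain ⟨c, hc⟩ := hleft x ⟨hax, hx.2⟩
      obtain ⟨t, ht, htb⟩ := Metric.exists_isBounded_image_of_tendsto hc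
      exact ⟨t, nhdsWithin_mono _ inter_subset_right ht, htb⟩
  have hr : ∃ t ∈ 𝓝[Icc a b ∩ Ici x] x, IsBounded (g '' t) := by
    rcases eq_or_lt_of_le hx.2 with rfl | hxb
    · refine ⟨_, self_mem_nhdsWithin, (isBounded_singleton (x := g x)).subset ?_⟩
      rintro _ ⟨s, hs, rfl⟩
      rw [le_antisymm hs.1.2 hs.2]
      rfl
    · obtain ⟨c, hc⟩ := hright x ⟨hx.1, hxb⟩
      obtain ⟨t, ht, htb⟩ := Metric.exists_isBounded_image_of_tendsto hc
      exact ⟨t, nhdsWithin_mono _ inter_subset_right ht, htb⟩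
  obtain ⟨t₁, ht₁, hb₁⟩ := hl
  obtain ⟨t₂, ht₂, hb₂⟩ := hr
  refine ⟨t₁ ∪ t₂, ?_, by rw [image_union]; exact hb₁.union hb₂⟩
  have hsplit : Icc a b = Icc a b ∩ Iio x ∪ Icc a b ∩ Ici x := by
    rw [← inter_union_distrib_left, Iio_union_Ici, inter_univ]
  rw [hsplit, nhdsWithin_union]
  exact union_mem_sup ht₁ ht₂

theorem tendsto_intervalIntegral_div_of_tendsto_nhdsLT {φ : ℝ → ℝ} (hφ : LocallyIntegrable φ)
    {u L : ℝ} (h : Tendsto φ (𝓝[<] u) (𝓝 L)) :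
    Tendsto (fun ε => (∫ s in (u - ε)..u, φ s) / ε) (𝓝[>] 0) (𝓝 L) := by
  have hII : ∀ c d, IntervalIntegrable φ volume c d := fun c d =>
    (hφ.integrableOn_isCompact isCompact_uIcc).intervalIntegrable
  have hae : 𝓝[≤] u ⊓ ae volume ≤ 𝓝[<] u := by
    calc 𝓝[≤] u ⊓ ae volume ≤ 𝓝[≤] u ⊓ 𝓟 {u}ᶜ :=
          inf_le_inf_left _ (le_principal_iff.2 (compl_mem_ae_iff.2 (measure_singleton u)))
      _ = 𝓝[<] u := by rw [← nhdsWithin_inter', ← sdiff_eq, Iic_sdiff_right]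
  have hderiv : HasDerivWithinAt (fun v => ∫ s in (0 : ℝ)..v, φ s) L (Iic u) u :=
    intervalIntegral.integral_hasDerivWithinAt_of_tendsto_ae_right
      (hII 0 u) hφ.aestronglyMeasurable.stronglyMeasurableAtFilter (h.mono_left hae)
  have hshift : Tendsto (fun ε => u - ε) (𝓝[>] 0) (𝓝[<] u) := by
    refine tendsto_nhdsWithin_of_tendsto_nhds_of_eventually_within _ ?_ ?_
    · exact ((continuous_const.sub continuous_id).tendsto' 0 u (sub_zero u)).mono_left
        nhdsWithin_le_nhds
    · filter_upwards [self_mem_nhdsWithin] with ε (hε : 0 < ε)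
      exact sub_lt_self u hε
  rw [hasDerivWithinAt_iff_tendsto_slope, Iic_sdiff_right] at hderiv
  refine (hderiv.comp hshift).congr fun ε => ?_
  rw [Function.comp_apply, slope_def_field, ← intervalIntegral.integral_interval_sub_left
    (a := 0) (b := u) (c := u - ε) (hII _ _) (hII _ _)]
  ring

def forwardStrip (ε : ℝ) : Set (ℝ × ℝ) := {p | p.2 ∈ Ioc p.1 (p.1 + ε)}

theorem measurableSet_forwardStrip (ε : ℝ) : MeasurableSet (forwardStrip ε) :=
  (measurableSet_lt measurable_fst measurable_snd).inter
    (measurableSet_le measurable_snd (measurable_fst.add_const ε))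

theorem mem_forwardStrip_iff {s x ε : ℝ} : (s, x) ∈ forwardStrip ε ↔ s ∈ Ico (x - ε) x := by
  change x ∈ Ioc s (s + ε) ↔ _
  simp only [mem_Ioc, mem_Ico]
  constructor <;> rintro ⟨h₁, h₂⟩ <;> constructor <;> linarith

theorem integral_mul_indicator_forwardStrip_left {φ : ℝ → ℝ} {ε : ℝ} (μ : Measure ℝ)
    (s : ℝ) :
    ∫ x, φ s * (forwardStrip ε).indicator 1 (s, x) ∂μ = φ s * μ.real (Ioc s (s + ε)) := by
  rw [integral_const_mul, ← integral_indicator_one measurableSet_Ioc]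
  rfl

section ForwardStrip

variable {φ : ℝ → ℝ} {M ε : ℝ} (μ : Measure ℝ) [IsFiniteMeasure μ]

theorem prod_apply_forwardStrip (ε : ℝ) :
    volume.prod μ (forwardStrip ε) = ENNReal.ofReal ε * μ univ := by
  rw [Measure.prod_apply_symm (measurableSet_forwardStrip ε), ← lintegral_const]
  refine lintegral_congr fun x => ?_
  rw [show (fun s => (s, x)) ⁻¹' forwardStrip ε = Ico (x - ε) x from
    ext fun s => mem_forwardStrip_iff, Real.volume_Ico, sub_sub_cancel]

theorem integrable_mul_indicator_forwardStrip (hφ : Measurable φ) (hM : ∀ x, ‖φ x‖ ≤ M)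
    (ε : ℝ) :
    Integrable (fun p : ℝ × ℝ => φ p.1 * (forwardStrip ε).indicator 1 p) (volume.prod μ) := by
  refine Integrable.bdd_mul ?_ (hφ.comp measurable_fst).aestronglyMeasurable
    (.of_forall fun p => hM p.1)
  refine (integrableOn_const ?_).integrable_indicator (measurableSet_forwardStrip ε)
  rw [prod_apply_forwardStrip]
  finiteness

theorem integral_mul_indicator_forwardStrip_right (hε : 0 ≤ ε) (x : ℝ) :
    ∫ s, φ s * (forwardStrip ε).indicator 1 (s, x) = ∫ s in (x - ε)..x, φ s := by
  rw [intervalIntegral.integral_of_le (by linarith), ← integral_Ico_eq_integral_Ioc,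
    ← integral_indicator measurableSet_Ico]
  congr 1 with s
  by_cases hs : s ∈ Ico (x - ε) x
  · simp [indicator_of_mem hs, indicator_of_mem (mem_forwardStrip_iff.2 hs)]
  · simp [indicator_of_notMem hs, indicator_of_notMem (mt mem_forwardStrip_iff.1 hs)]

theorem integrable_mul_measureReal_Ioc_add (hφ : Measurable φ) (hM : ∀ x, ‖φ x‖ ≤ M)
    (ε : ℝ) :
    Integrable (fun s => φ s * μ.real (Ioc s (s + ε))) := by
  simpa only [integral_mul_indicator_forwardStrip_left] using
    (integrable_mul_indicator_forwardStrip μ hφ hM ε).integral_prod_left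

theorem integral_mul_measureReal_Ioc_add (hφ : Measurable φ) (hM : ∀ x, ‖φ x‖ ≤ M)
    (hε : 0 ≤ ε) :
    ∫ s, φ s * μ.real (Ioc s (s + ε)) = ∫ x, (∫ s in (x - ε)..x, φ s) ∂μ := by
  have h := integrable_mul_indicator_forwardStrip μ hφ hM ε
  simp_rw [← integral_mul_indicator_forwardStrip_left μ, ← integral_prod _ h,
    integral_prod_symm _ h, integral_mul_indicator_forwardStrip_right hε]

end ForwardStrip

theorem tendsto_integral_mul_measureReal_Ioc_add_div (μ : Measure ℝ) [IsFiniteMeasure μ]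
    {φ Λ : ℝ → ℝ} {M : ℝ} (hφ : Measurable φ) (hM : ∀ x, ‖φ x‖ ≤ M)
    (hΛ : ∀ᵐ x ∂μ, Tendsto φ (𝓝[<] x) (𝓝 (Λ x))) :
    Tendsto (fun ε => ∫ s, φ s * μ.real (Ioc s (s + ε)) / ε) (𝓝[>] 0) (𝓝 (∫ x, Λ x ∂μ)) := by
  have hloc : LocallyIntegrable φ :=
    (memLp_top_of_bound hφ.aestronglyMeasurable M (.of_forall hM)).locallyIntegrable le_top
  have hII : ∀ c d, IntervalIntegrable φ volume c d := fun c d =>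
    (hloc.integrableOn_isCompact isCompact_uIcc).intervalIntegrable
  have hmeas : ∀ ε, AEStronglyMeasurable (fun x => (∫ s in (x - ε)..x, φ s) / ε) μ := by
    intro ε
    have hprim := intervalIntegral.continuous_primitive hII 0
    have h : Continuous fun x => ∫ s in (x - ε)..x, φ s :=
      (hprim.sub (hprim.comp (continuous_sub_right ε))).congr fun x =>
        intervalIntegral.integral_interval_sub_left (hII 0 _) (hII 0 _)
    exact (h.div_const ε).aestronglyMeasurable
  have hbound : ∀ᶠ ε in 𝓝[>] 0, ∀ᵐ x ∂μ, ‖(∫ s in (x - ε)..x, φ s) / ε‖ ≤ M := by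
    filter_upwards [self_mem_nhdsWithin] with ε (hε : 0 < ε)
    refine .of_forall fun x => ?_
    rw [norm_div, Real.norm_of_nonneg hε.le, div_le_iff₀ hε]
    simpa [abs_of_pos hε] using
      intervalIntegral.norm_integral_le_of_norm_le_const (a := x - ε) (b := x) fun s _ => hM s
  refine (tendsto_integral_filter_of_dominated_convergence _ (.of_forall hmeas) hbound
    (integrable_const M) (hΛ.mono fun x => tendsto_intervalIntegral_div_of_tendsto_nhdsLT hloc)
    ).congr' ?_
  filter_upwards [self_mem_nhdsWithin] with ε (hε : 0 < ε)
  rw [integral_div, integral_div, integral_mul_measureReal_Ioc_add μ hφ hM hε.le]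

theorem measureReal_Ioc_eq_sub_Iic (μ : Measure ℝ) [IsFiniteMeasure μ] {s t : ℝ}
    (hst : s ≤ t) :
    μ.real (Ioc s t) = μ.real (Iic t) - μ.real (Iic s) := by
  rw [← Iic_sdiff_Iic, measureReal_sdiff (Iic_subset_Iic.2 hst) measurableSet_Iic]

theorem StieltjesFunction.measureReal_restrict_Ioc_Iic (F : StieltjesFunction ℝ) {a b : ℝ}
    (hab : a ≤ b) (x : ℝ) :
    (F.measure.restrict (Ioc a b)).real (Iic x) = F (max a (min b x)) - F a := by
  rw [measureReal_restrict_apply measurableSet_Iic, inter_comm, Ioc_inter_Iic, measureReal_def,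
    F.measure_Ioc]
  rcases le_total a x with hax | hxa
  · rw [max_eq_right (le_min hab hax),
      ENNReal.toReal_ofReal (sub_nonneg.2 (F.mono (le_min hab hax)))]
  · rw [max_eq_left (min_le_of_right_le hxa), sub_self,
      ENNReal.ofReal_of_nonpos (sub_nonpos.2 (F.mono (min_le_of_right_le hxa))),
      ENNReal.toReal_zero]

instance StieltjesFunction.isFiniteMeasure_restrict_Ioc (F : StieltjesFunction ℝ) (a b : ℝ) :
    IsFiniteMeasure (F.measure.restrict (Ioc a b)) :=
  isFiniteMeasure_restrict.2 measure_Ioc_lt_top.ne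

-- `g_J` and `f_{J̄}` of the paper, for `J = ]a, b]`.
noncomputable def extendJ (g : ℝ → ℝ) (a b s : ℝ) : ℝ :=
  if s < a then g a else if s ≤ b then g s else 0

noncomputable def extendJbar (f : ℝ → ℝ) (a b s : ℝ) : ℝ :=
  if s < a then 0 else if s ≤ b then f s else f b

section extendJ

variable {g : ℝ → ℝ} {a b : ℝ}

theorem extendJ_eq_ite (hab : a ≤ b) :
    extendJ g a b = fun s => if s ≤ b then g (max a (min b s)) else 0 := by
  ext s
  unfold extendJ
  split_ifs with h₁ h₂ h₂ <;> first | rfl | (exfalso; linarith) | skip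
  · rw [min_eq_right (by linarith), max_eq_left h₁.le]
  · rw [min_eq_right h₂, max_eq_right (not_lt.1 h₁)]

theorem measurable_extendJ (hab : a ≤ b) (hg : ∀ x ∈ Ico a b, ContinuousWithinAt g (Ici x) x) :
    Measurable (extendJ g a b) := by
  have hgIcc : ∀ y ∈ Icc a b, ContinuousWithinAt g (Icc a b ∩ Ici y) y := by
    intro y hy
    rcases eq_or_lt_of_le hy.2 with rfl | hyb
    · exact continuousWithinAt_singleton.mono fun s hs => le_antisymm hs.1.2 hs.2
    · exact (hg y ⟨hy.1, hyb⟩).mono inter_subset_right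
  have hproj : Continuous fun s => max a (min b s) := by fun_prop
  have hright : ∀ x, ContinuousWithinAt (fun s => g (max a (min b s))) (Ici x) x := fun x =>
    ContinuousWithinAt.comp (f := fun s => max a (min b s))
      (hgIcc _ ⟨le_max_left _ _, max_le hab (min_le_left _ _)⟩) hproj.continuousWithinAt
      fun s (hs : x ≤ s) => ⟨⟨le_max_left _ _, max_le hab (min_le_left _ _)⟩,
        max_le_max le_rfl (min_le_min le_rfl hs)⟩
  rw [extendJ_eq_ite hab]
  exact (measurable_of_continuousWithinAt_Ici hright).ite measurableSet_Iic measurable_const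

theorem exists_norm_extendJ_le (hab : a ≤ b) (hg : IsBounded (g '' Icc a b)) :
    ∃ M, ∀ s, ‖extendJ g a b s‖ ≤ M := by
  obtain ⟨C, hC⟩ := isBounded_iff_forall_norm_le.1 hg
  refine ⟨max C 0, fun s => ?_⟩
  unfold extendJ
  split_ifs with h₁ h₂
  · exact (hC _ (mem_image_of_mem g (left_mem_Icc.2 hab))).trans (le_max_left _ _)
  · exact (hC _ (mem_image_of_mem g ⟨not_lt.1 h₁, h₂⟩)).trans (le_max_left _ _)
  · simp

theorem tendsto_extendJ_nhdsLT_left : Tendsto (extendJ g a b) (𝓝[<] a) (𝓝 (g a)) :=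
  tendsto_const_nhds.congr' <| eventually_nhdsWithin_of_forall fun s (hs : s < a) => by
    simp [extendJ, hs]

theorem tendsto_extendJ_nhdsLT {x c : ℝ} (hx : x ∈ Ioc a b) (h : Tendsto g (𝓝[<] x) (𝓝 c)) :
    Tendsto (extendJ g a b) (𝓝[<] x) (𝓝 c) :=
  h.congr' <| mem_of_superset (Ioo_mem_nhdsLT hx.1) fun s hs => by
    simp [extendJ, not_lt.2 hs.1.le, hs.2.le.trans hx.2]

end extendJ

section extendJbar

variable {f : ℝ → ℝ} {a b : ℝ} {f₁ f₂ : StieltjesFunction ℝ}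

theorem extendJbar_eq (hab : a ≤ b) (hf : ∀ x ∈ Icc a b, f x = f₁ x - f₂ x) (x : ℝ) :
    extendJbar f a b x = (f₁.measure.restrict (Ioc a b)).real (Iic x)
      - (f₂.measure.restrict (Ioc a b)).real (Iic x) + f a * (Measure.dirac a).real (Iic x) := by
  simp only [f₁.measureReal_restrict_Ioc_Iic hab, f₂.measureReal_restrict_Ioc_Iic hab,
    measureReal_def, Measure.dirac_apply' _ measurableSet_Iic, extendJbar]
  rw [hf a (left_mem_Icc.2 hab)]
  rcases lt_or_ge x a with hxa | hax
  · simp [hxa, min_eq_right (hxa.le.trans hab), hxa.le]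
  rw [indicator_of_mem (mem_Iic.2 hax), Pi.one_apply, ENNReal.toReal_one, mul_one,
    if_neg (not_lt.2 hax)]
  rcases le_or_gt x b with hxb | hbx
  · rw [if_pos hxb, min_eq_right hxb, max_eq_right hax, hf x ⟨hax, hxb⟩]
    ring
  · rw [if_neg (not_le.2 hbx), min_eq_left hbx.le, max_eq_right hab,
      hf b (right_mem_Icc.2 hab)]
    ring

theorem extendJbar_sub (hab : a ≤ b) (hf : ∀ x ∈ Icc a b, f x = f₁ x - f₂ x) {s t : ℝ}
    (hst : s ≤ t) :
    extendJbar f a b t - extendJbar f a b s = (f₁.measure.restrict (Ioc a b)).real (Ioc s t)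
      - (f₂.measure.restrict (Ioc a b)).real (Ioc s t)
      + f a * (Measure.dirac a).real (Ioc s t) := by
  simp only [extendJbar_eq hab hf, measureReal_Ioc_eq_sub_Iic _ hst]
  ring

end extendJbar

/-- Forward integral of a càdlàg `g` with respect to a càdlàg bounded variation `f`
(written as a difference of Stieltjes functions on `[a,b]`) exists and equals the
Lebesgue–Stieltjes integral `g(a)f(a) + ∫_{]a,b]} g(s⁻) df(s)`. -/
theorem stmt0 (a b : ℝ) (hab : a < b) (f g gl : ℝ → ℝ)
    (f₁ f₂ : StieltjesFunction ℝ)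
    (hf : ∀ x ∈ Set.Icc a b, f x = f₁ x - f₂ x)
    (hg_rc : ∀ x ∈ Set.Ico a b, Tendsto g (𝓝[≥] x) (𝓝 (g x)))
    (hg_ll : ∀ x ∈ Set.Ioc a b, Tendsto g (𝓝[<] x) (𝓝 (gl x))) :
    Tendsto
      (fun ε : ℝ => ∫ s : ℝ,
        (if s < a then g a else if s ≤ b then g s else 0) *
          ((if s + ε < a then 0 else if s + ε ≤ b then f (s + ε) else f b) -
            (if s < a then 0 else if s ≤ b then f s else f b)) / ε)
      (𝓝[>] 0)
      (𝓝 (g a * f a +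
        ((∫ s in Set.Ioc a b, gl s ∂f₁.measure) -
          ∫ s in Set.Ioc a b, gl s ∂f₂.measure))) := by
  change Tendsto (fun ε => ∫ s, extendJ g a b s *
    (extendJbar f a b (s + ε) - extendJbar f a b s) / ε) _ _
  have hφ := measurable_extendJ hab.le hg_rc
  obtain ⟨M, hM⟩ := exists_norm_extendJ_le hab.le <| isBounded_image_Icc_of_tendsto_nhdsGE_nhdsLT
    (fun x hx => ⟨_, hg_rc x hx⟩) fun x hx => ⟨_, hg_ll x hx⟩
  have hJ : ∀ x ∈ Ioc a b, Tendsto (extendJ g a b) (𝓝[<] x) (𝓝 (gl x)) := fun x hx =>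
    tendsto_extendJ_nhdsLT hx (hg_ll x hx)
  have h₁ := tendsto_integral_mul_measureReal_Ioc_add_div _ hφ hM
    (ae_restrict_of_forall_mem (μ := f₁.measure) measurableSet_Ioc hJ)
  have h₂ := tendsto_integral_mul_measureReal_Ioc_add_div _ hφ hM
    (ae_restrict_of_forall_mem (μ := f₂.measure) measurableSet_Ioc hJ)
  have hδ := tendsto_integral_mul_measureReal_Ioc_add_div (Measure.dirac a) hφ hM
    (Λ := fun _ => g a) (by rw [ae_dirac_eq]; exact tendsto_extendJ_nhdsLT_left)
  have hlim := (h₁.sub h₂).add (hδ.const_mul (f a))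
  rw [integral_dirac] at hlim
  convert hlim.congr' ?_ using 2
  · ring
  filter_upwards [self_mem_nhdsWithin] with ε (hε : 0 < ε)
  have hint (μ : Measure ℝ) [IsFiniteMeasure μ] :=
    (integrable_mul_measureReal_Ioc_add μ hφ hM ε).div_const ε
  rw [← integral_sub (hint _) (hint _), ← integral_const_mul, ← integral_add
    (by exact (hint _).sub (hint _)) ((hint _).const_mul _)]
  refine integral_congr_ae (.of_forall fun s => ?_)
  simp only [extendJbar_sub hab.le hf (le_add_of_nonneg_right hε.le)]
  ring
end

section
/- For each a ∈ ℝ, the set C_a([-T,0]) = {η ∈ C([-T,0]) : η(0) = a} is dense in 𝒞_a([-T,0]) = {η ∈ 𝒞([-T,0]) : η(0) = a} with respect to the convergence of 𝒞([-T,0]) (uniform boundedness, uniform convergence on compacts of [-T,0[, and convergence at 0). -/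
/-!
Freeze `η` at `-ε` on `[-ε, 0]` and add a linear ramp that corrects the value at `0` to `a`.
The result is continuous on `[-T, 0]`, bounded by `2C + |a|` when `|η| ≤ C`, and equal to `η`
on `[-T, -ε]`. A compact subset of `[-T, 0[` lies in some `[-T, b]` with `b < 0`, so once
`ε < -b` the approximations agree with `η` on it.
-/

open Filter Topology Set

noncomputable def patchAtZero (η : ℝ → ℝ) (a ε : ℝ) (x : ℝ) : ℝ :=
  η (min x (-ε)) + (a - η (-ε)) * max (1 + x / ε) 0

section patchAtZero

variable {η : ℝ → ℝ} {a ε : ℝ}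

theorem patchAtZero_zero (hε : 0 ≤ ε) : patchAtZero η a ε 0 = a := by
  simp [patchAtZero, min_eq_right (neg_nonpos.mpr hε)]

theorem patchAtZero_of_le {x : ℝ} (hε : 0 < ε) (hx : x ≤ -ε) : patchAtZero η a ε x = η x := by
  have hramp : 1 + x / ε ≤ 0 := by
    have : x / ε ≤ -1 := by rwa [div_le_iff₀ hε, neg_one_mul]
    linarith
  simp [patchAtZero, min_eq_left hx, max_eq_right hramp]

theorem continuousOn_patchAtZero {T : ℝ} (hηc : ContinuousOn η (Ico (-T) 0)) (hε : 0 < ε)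
    (hεT : ε ≤ T) : ContinuousOn (patchAtZero η a ε) (Icc (-T) 0) := by
  have hmaps : MapsTo (fun x => min x (-ε)) (Icc (-T) 0) (Ico (-T) 0) := fun x hx =>
    ⟨le_min hx.1 (neg_le_neg hεT), (min_le_right _ _).trans_lt (neg_lt_zero.mpr hε)⟩
  exact (hηc.comp (continuous_id.min continuous_const).continuousOn hmaps).add
    (by fun_prop)

theorem abs_patchAtZero_le {T C x : ℝ} (hC : ∀ y ∈ Icc (-T) 0, |η y| ≤ C) (hε : 0 < ε)
    (hεT : ε ≤ T) (hx : x ∈ Icc (-T) 0) : |patchAtZero η a ε x| ≤ C + (|a| + C) := by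
  have hfrozen : |η (min x (-ε))| ≤ C :=
    hC _ ⟨le_min hx.1 (neg_le_neg hεT), (min_le_right _ _).trans (neg_nonpos.mpr hε.le)⟩
  have hjump : |a - η (-ε)| ≤ |a| + C :=
    (abs_sub _ _).trans (add_le_add_right (hC _ ⟨neg_le_neg hεT, neg_nonpos.mpr hε.le⟩) _)
  have hramp₀ : 0 ≤ max (1 + x / ε) 0 := le_max_right _ _
  have hramp₁ : max (1 + x / ε) 0 ≤ 1 :=
    max_le (by linarith [div_nonpos_of_nonpos_of_nonneg hx.2 hε.le]) zero_le_one
  calc |patchAtZero η a ε x|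
      ≤ |η (min x (-ε))| + |a - η (-ε)| * max (1 + x / ε) 0 :=
        (abs_add_le _ _).trans_eq (by rw [abs_mul, abs_of_nonneg hramp₀])
    _ ≤ C + (|a| + C) * 1 := by
        gcongr
        exact (abs_nonneg _).trans hjump
    _ = C + (|a| + C) := by rw [mul_one]

end patchAtZero

theorem IsCompact.exists_lt_forall_le_of_subset_Iio {α : Type*} [LinearOrder α]
    [TopologicalSpace α] [ClosedIciTopology α] [NoMinOrder α] {K : Set α} {c : α}
    (hK : IsCompact K) (hKc : K ⊆ Iio c) : ∃ b < c, ∀ x ∈ K, x ≤ b := by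
  rcases K.eq_empty_or_nonempty with rfl | hne
  · obtain ⟨b, hb⟩ := exists_lt c
    exact ⟨b, hb, by simp⟩
  · obtain ⟨b, hbK, hb⟩ := hK.exists_isGreatest hne
    exact ⟨b, hKc hbK, hb⟩

theorem tendstoUniformlyOn_self {α β ι : Type*} [UniformSpace β] (f : α → β) (p : Filter ι)
    (s : Set α) : TendstoUniformlyOn (fun _ => f) f p s :=
  fun _ hu => Eventually.of_forall fun _ _ _ => refl_mem_uniformity hu

theorem tendstoUniformlyOn_patchAtZero {η : ℝ → ℝ} {a : ℝ} {ε : ℕ → ℝ} {K : Set ℝ}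
    (hεpos : ∀ n, 0 < ε n) (hε : Tendsto ε atTop (𝓝 0)) (hK : IsCompact K) (hK0 : K ⊆ Iio 0) :
    TendstoUniformlyOn (fun n => patchAtZero η a (ε n)) η atTop K := by
  obtain ⟨b, hb, hKb⟩ := hK.exists_lt_forall_le_of_subset_Iio hK0
  refine (tendstoUniformlyOn_self η atTop K).congr ?_
  filter_upwards [hε.eventually (gt_mem_nhds (neg_pos.mpr hb))] with n hn x hx
  exact (patchAtZero_of_le (hεpos n) (by linarith [hKb x hx])).symm

/-- `C_a([-T,0])` is dense in `𝒞_a([-T,0])`: for every bounded `η` continuous on `[-T,0[`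
with `η(0) = a`, there is a sequence of continuous functions on `[-T,0]` with value `a` at
`0` that is uniformly bounded, converges to `η` uniformly on every compact of `[-T,0[`, and
converges to `η(0)` at `0`. -/
theorem stmt5 (T : ℝ) (hT : 0 < T) (a : ℝ) (η : ℝ → ℝ)
    (hηb : ∃ C, ∀ x ∈ Set.Icc (-T) (0:ℝ), |η x| ≤ C)
    (hηc : ContinuousOn η (Set.Ico (-T) 0))
    (hη0 : η 0 = a) :
    ∃ φ : ℕ → ℝ → ℝ,
      (∀ n, ContinuousOn (φ n) (Set.Icc (-T) 0)) ∧
      (∀ n, φ n 0 = a) ∧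
      (∃ C, ∀ n, ∀ x ∈ Set.Icc (-T) (0:ℝ), |φ n x| ≤ C) ∧
      (∀ K ⊆ Set.Ico (-T) (0:ℝ), IsCompact K → TendstoUniformlyOn φ η atTop K) ∧
      Tendsto (fun n => φ n 0) atTop (𝓝 (η 0)) := by
  obtain ⟨C, hC⟩ := hηb
  set ε : ℕ → ℝ := fun n => T / (n + 1)
  have hεpos : ∀ n, 0 < ε n := fun n => by positivity
  have hεT : ∀ n, ε n ≤ T := fun n => div_le_self hT.le (by simp)
  have hε : Tendsto ε atTop (𝓝 0) := by
    simpa using (tendsto_add_atTop_iff_nat 1).mpr (tendsto_const_div_atTop_nhds_zero_nat T)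
  have hφ0 : ∀ n, patchAtZero η a (ε n) 0 = a := fun n => patchAtZero_zero (hεpos n).le
  refine ⟨fun n => patchAtZero η a (ε n), fun n => continuousOn_patchAtZero hηc (hεpos n) (hεT n),
    hφ0, ⟨C + (|a| + C), fun n x hx => abs_patchAtZero_le hC (hεpos n) (hεT n) hx⟩,
    fun K hK hKc => tendstoUniformlyOn_patchAtZero hεpos hε hKc fun x hx => (hK hx).2, ?_⟩
  simp only [hφ0, hη0, tendsto_const_nhds]
end

section
/- Every continuous linear functional Λ on 𝒞([-T,0[) admits a unique representation Λγ = ∫_{[-T,0[} γ(x) μ(dx) for all γ ∈ 𝒞([-T,0[), where μ is a finite signed Borel measure on [-T,0] with μ({0}) = 0. -/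
/-!
Writing `Λ = Λ⁺ - Λ⁻` with `Λ⁺ γ = sup {Λ η : 0 ≤ η ≤ γ}` (finite because sequential continuity
forces `Λ` to be bounded) reduces existence to positive functionals `S`. On compactly supported
functions on `[-T,0[`, `S` is integration against its Riesz–Markov–Kakutani measure. The cut-offs
`1 - χₖ` tend to `0` uniformly on the compact subsets of `[-T,0[`, so `S (1 - χₖ) → 0`: no mass
escapes to `0`, and monotone convergence along `γ χₖ` extends the representation to all of
`𝒞([-T,0[)`. For uniqueness, two representing signed measures give finite measures carried by
`[-T,0[` with the same integrals of all bounded continuous functions.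
-/

open MeasureTheory Filter Topology Set

/-- Membership in `𝒞([-T,0[)`: bounded and continuous on `[-T,0[`. -/
def memScrC' (T : ℝ) (γ : ℝ → ℝ) : Prop :=
  (∃ C, ∀ x ∈ Set.Ico (-T) (0:ℝ), |γ x| ≤ C) ∧ ContinuousOn γ (Set.Ico (-T) 0)

open scoped NNReal ENNReal CompactlySupported

namespace memScrC'

variable {T : ℝ} {γ ξ : ℝ → ℝ}

theorem of_continuous (h : Continuous γ) : memScrC' T γ := by
  obtain ⟨C, hC⟩ := (isCompact_Icc (a := -T) (b := 0)).exists_bound_of_continuousOn h.continuousOn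
  exact ⟨⟨C, fun x hx => hC x (Ico_subset_Icc_self hx)⟩, h.continuousOn⟩

theorem add (hγ : memScrC' T γ) (hξ : memScrC' T ξ) : memScrC' T (γ + ξ) := by
  obtain ⟨⟨C, hC⟩, hγc⟩ := hγ
  obtain ⟨⟨D, hD⟩, hξc⟩ := hξ
  exact ⟨⟨C + D, fun x hx => (abs_add_le _ _).trans (add_le_add (hC x hx) (hD x hx))⟩,
    hγc.add hξc⟩

theorem mul (hγ : memScrC' T γ) (hξ : memScrC' T ξ) : memScrC' T (γ * ξ) := by
  obtain ⟨⟨C, hC⟩, hγc⟩ := hγ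
  obtain ⟨⟨D, hD⟩, hξc⟩ := hξ
  refine ⟨⟨C * D, fun x hx => ?_⟩, hγc.mul hξc⟩
  rw [Pi.mul_apply, abs_mul]
  exact mul_le_mul (hC x hx) (hD x hx) (abs_nonneg _) ((abs_nonneg _).trans (hC x hx))

theorem smul (c : ℝ) (hγ : memScrC' T γ) : memScrC' T (c • γ) :=
  (of_continuous (T := T) continuous_const).mul hγ

theorem sub (hγ : memScrC' T γ) (hξ : memScrC' T ξ) : memScrC' T (γ - ξ) := by
  simpa [sub_eq_add_neg] using hγ.add (hξ.smul (-1))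

theorem inf (hγ : memScrC' T γ) (hξ : memScrC' T ξ) : memScrC' T (γ ⊓ ξ) := by
  obtain ⟨⟨C, hC⟩, hγc⟩ := hγ
  obtain ⟨⟨D, hD⟩, hξc⟩ := hξ
  refine ⟨⟨max C D, fun x hx => ?_⟩, hγc.inf hξc⟩
  have h₁ := abs_le.1 (hC x hx)
  have h₂ := abs_le.1 (hD x hx)
  rw [Pi.inf_apply, abs_le]
  constructor
  · exact le_min (by linarith [le_max_left C D]) (by linarith [le_max_right C D])
  · exact (min_le_left _ _).trans (h₁.2.trans (le_max_left C D))

theorem continuous_restrict (hγ : memScrC' T γ) : Continuous fun x : Ico (-T) (0:ℝ) => γ x :=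
  continuousOn_iff_continuous_domRestrict.1 hγ.2

theorem integrableOn (hγ : memScrC' T γ) (m : Measure ℝ) [IsFiniteMeasure m] :
    IntegrableOn γ (Ico (-T) 0) m := by
  obtain ⟨⟨C, hC⟩, hγc⟩ := hγ
  exact Integrable.of_bound (hγc.aestronglyMeasurable measurableSet_Ico) C
    ((ae_restrict_iff' measurableSet_Ico).2 (ae_of_all _ hC))

end memScrC'

noncomputable def cutoff (k : ℕ) (t : ℝ) : ℝ := max 0 (min 1 (-(k + 1) * t - 1))

theorem continuous_cutoff (k : ℕ) : Continuous (cutoff k) := by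
  unfold cutoff; fun_prop

theorem cutoff_nonneg (k : ℕ) (t : ℝ) : 0 ≤ cutoff k t := le_max_left _ _

theorem cutoff_le_one (k : ℕ) (t : ℝ) : cutoff k t ≤ 1 := max_le zero_le_one (min_le_left _ _)

theorem cutoff_eq_zero {k : ℕ} {t : ℝ} (h : -1 / (k + 1) ≤ t) : cutoff k t = 0 := by
  rw [div_le_iff₀ (by positivity)] at h
  exact max_eq_left ((min_le_right _ _).trans (by linarith))

theorem cutoff_eq_one {k : ℕ} {t : ℝ} (h : t ≤ -2 / (k + 1)) : cutoff k t = 1 := by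
  rw [le_div_iff₀ (by positivity)] at h
  rw [cutoff, min_eq_left (by linarith)]
  exact max_eq_right zero_le_one

theorem one_sub_cutoff_nonneg (k : ℕ) (t : ℝ) : 0 ≤ (1 - cutoff k) t :=
  sub_nonneg.2 (cutoff_le_one k t)

theorem memScrC'_cutoff {T : ℝ} (k : ℕ) : memScrC' T (cutoff k) :=
  .of_continuous (continuous_cutoff k)

theorem memScrC'_one_sub_cutoff {T : ℝ} (k : ℕ) : memScrC' T (1 - cutoff k) :=
  .of_continuous (continuous_const.sub (continuous_cutoff k))

theorem monotone_cutoff {t : ℝ} (ht : t < 0) : Monotone fun k => cutoff k t := by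
  intro k l hkl
  have : (k : ℝ) ≤ l := by exact_mod_cast hkl
  exact max_le_max le_rfl (min_le_min le_rfl (by nlinarith))

theorem eventually_forall_cutoff_eq_one {t : ℝ} (ht : t < 0) :
    ∀ᶠ k : ℕ in atTop, ∀ s ≤ t, cutoff k s = 1 := by
  have h := tendsto_one_div_add_atTop_nhds_zero_nat.const_mul (-2 : ℝ)
  rw [mul_zero] at h
  filter_upwards [h.eventually (eventually_gt_nhds ht)] with k hk s hs
  exact cutoff_eq_one (hs.trans (by rw [← mul_one_div]; exact hk.le))

structure IsSeqContinuousLinear (T : ℝ) (Λ : (ℝ → ℝ) → ℝ) : Prop where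
  map_add : ∀ γ ξ, memScrC' T γ → memScrC' T ξ → Λ (γ + ξ) = Λ γ + Λ ξ
  map_smul : ∀ (c : ℝ) γ, memScrC' T γ → Λ (c • γ) = c * Λ γ
  tendsto : ∀ (γk : ℕ → ℝ → ℝ) (γ : ℝ → ℝ),
    (∀ k, memScrC' T (γk k)) → memScrC' T γ →
    (∃ C, ∀ k, ∀ x ∈ Set.Ico (-T) (0:ℝ), |γk k x| ≤ C) →
    (∀ K ⊆ Set.Ico (-T) (0:ℝ), IsCompact K → TendstoUniformlyOn γk γ atTop K) →
    Tendsto (fun k => Λ (γk k)) atTop (𝓝 (Λ γ))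

namespace IsSeqContinuousLinear

variable {T : ℝ} {Λ : (ℝ → ℝ) → ℝ} (hΛ : IsSeqContinuousLinear T Λ) {γ ξ : ℝ → ℝ}
include hΛ

theorem map_zero : Λ 0 = 0 := by
  simpa using hΛ.map_smul 0 0 (.of_continuous continuous_const)

theorem map_sub (hγ : memScrC' T γ) (hξ : memScrC' T ξ) : Λ (γ - ξ) = Λ γ - Λ ξ := by
  rw [eq_sub_iff_add_eq, ← hΛ.map_add _ _ (hγ.sub hξ) hξ, sub_add_cancel]

theorem tendsto_zero_of_abs_le {f : ℕ → ℝ → ℝ} (hf : ∀ k, memScrC' T (f k)) {ε : ℕ → ℝ}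
    (hε : Tendsto ε atTop (𝓝 0)) (hfε : ∀ k, ∀ x ∈ Ico (-T) 0, |f k x| ≤ ε k) :
    Tendsto (fun k => Λ (f k)) atTop (𝓝 0) := by
  obtain ⟨C, hC⟩ := hε.bddAbove_range
  rw [← hΛ.map_zero]
  refine hΛ.tendsto f 0 hf (.of_continuous continuous_const)
    ⟨C, fun k x hx => (hfε k x hx).trans (hC ⟨k, rfl⟩)⟩ fun K hK _ => ?_
  rw [Metric.tendstoUniformlyOn_iff]
  intro δ hδ
  filter_upwards [hε.eventually (gt_mem_nhds hδ)] with k hk x hx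
  simpa using (hfε k x (hK hx)).trans_lt hk

theorem congr (hγ : memScrC' T γ) (hξ : memScrC' T ξ) (h : EqOn γ ξ (Ico (-T) 0)) :
    Λ γ = Λ ξ := by
  have : Tendsto (fun _ : ℕ => Λ (γ - ξ)) atTop (𝓝 0) :=
    hΛ.tendsto_zero_of_abs_le (fun _ => hγ.sub hξ) tendsto_const_nhds
      fun _ x hx => by simp [h hx]
  rw [← sub_eq_zero, ← hΛ.map_sub hγ hξ]
  exact tendsto_nhds_unique tendsto_const_nhds this

theorem tendsto_zero_of_eventually_eq_zero {f : ℕ → ℝ → ℝ} (hf : ∀ k, memScrC' T (f k))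
    {C : ℝ} (hC : ∀ k, ∀ x ∈ Ico (-T) 0, |f k x| ≤ C)
    (hvan : ∀ t < 0, ∀ᶠ k in atTop, ∀ x ∈ Icc (-T) t, f k x = 0) :
    Tendsto (fun k => Λ (f k)) atTop (𝓝 0) := by
  rw [← hΛ.map_zero]
  refine hΛ.tendsto f 0 hf (.of_continuous continuous_const) ⟨C, hC⟩ fun K hK hKc => ?_
  rcases K.eq_empty_or_nonempty with rfl | hKne
  · exact tendstoUniformlyOn_empty
  obtain ⟨m, hmK, hm⟩ := hKc.exists_isGreatest hKne
  rw [Metric.tendstoUniformlyOn_iff]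
  intro δ hδ
  filter_upwards [hvan _ (hK hmK).2] with k hk x hx
  simpa [hk x ⟨(hK hx).1, hm hx⟩] using hδ

theorem exists_le : ∃ M, ∀ γ, memScrC' T γ → (∀ x ∈ Ico (-T) 0, |γ x| ≤ 1) → Λ γ ≤ M := by
  by_contra! h
  choose γ hγ hγ1 hlt using fun k : ℕ => h ((k + 1) ^ 2)
  have hnull := hΛ.tendsto_zero_of_abs_le (fun k => (hγ k).smul (1 / ((k : ℝ) + 1)))
    tendsto_one_div_add_atTop_nhds_zero_nat fun k x hx => by
      rw [Pi.smul_apply, smul_eq_mul, abs_mul, abs_of_pos (by positivity)]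
      exact mul_le_of_le_one_right (by positivity) (hγ1 k x hx)
  obtain ⟨k, hk⟩ := (hnull.eventually (gt_mem_nhds one_pos)).exists
  have hk1 : (1 : ℝ) ≤ k + 1 := by linarith [(k.cast_nonneg : (0 : ℝ) ≤ k)]
  rw [hΛ.map_smul _ _ (hγ k), div_mul_eq_mul_div, one_mul, div_lt_one (by positivity)] at hk
  nlinarith [hlt k]

end IsSeqContinuousLinear

/-- A positive functional on `𝒞([-T,0[)` that puts no mass at `0`. -/
structure PosFunctional (T : ℝ) where
  toFun : (ℝ → ℝ) → ℝ
  congr : ∀ γ ξ, memScrC' T γ → memScrC' T ξ → EqOn γ ξ (Ico (-T) 0) → toFun γ = toFun ξ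
  map_add : ∀ γ ξ, memScrC' T γ → memScrC' T ξ → (∀ x ∈ Ico (-T) 0, 0 ≤ γ x) →
    (∀ x ∈ Ico (-T) 0, 0 ≤ ξ x) → toFun (γ + ξ) = toFun γ + toFun ξ
  map_smul : ∀ (c : ℝ) γ, 0 < c → memScrC' T γ → (∀ x ∈ Ico (-T) 0, 0 ≤ γ x) →
    toFun (c • γ) = c * toFun γ
  nonneg : ∀ γ, memScrC' T γ → (∀ x ∈ Ico (-T) 0, 0 ≤ γ x) → 0 ≤ toFun γ
  tendsto_one_sub_cutoff : Tendsto (fun k => toFun (1 - cutoff k)) atTop (𝓝 0)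

namespace PosFunctional

variable {T : ℝ} (S : PosFunctional T) {γ ξ : ℝ → ℝ}

instance : CoeFun (PosFunctional T) fun _ => (ℝ → ℝ) → ℝ := ⟨toFun⟩

theorem map_zero : S 0 = 0 := by
  have h0 : memScrC' T 0 := .of_continuous continuous_const
  simpa using S.map_add 0 0 h0 h0 (fun _ _ => le_rfl) (fun _ _ => le_rfl)

theorem map_smul_of_nonneg {c : ℝ} (hc : 0 ≤ c) (hγ : memScrC' T γ)
    (hγ0 : ∀ x ∈ Ico (-T) 0, 0 ≤ γ x) : S (c • γ) = c * S γ := by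
  rcases hc.eq_or_lt with rfl | hc
  · rw [zero_smul, zero_mul, S.map_zero]
  · exact S.map_smul c γ hc hγ hγ0

theorem mono (hγ : memScrC' T γ) (hξ : memScrC' T ξ) (hγ0 : ∀ x ∈ Ico (-T) 0, 0 ≤ γ x)
    (hle : ∀ x ∈ Ico (-T) 0, γ x ≤ ξ x) : S γ ≤ S ξ := by
  have h := S.map_add γ (ξ - γ) hγ (hξ.sub hγ) hγ0 fun x hx => sub_nonneg.2 (hle x hx)
  rw [add_sub_cancel] at h
  linarith [S.nonneg _ (hξ.sub hγ) fun x hx => sub_nonneg.2 (hle x hx)]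

theorem tendsto_mul_cutoff (hγ : memScrC' T γ) (hγ0 : ∀ x ∈ Ico (-T) 0, 0 ≤ γ x) :
    Tendsto (fun k => S (γ * cutoff k)) atTop (𝓝 (S γ)) := by
  obtain ⟨C, hC⟩ := hγ.1
  have hχ k : memScrC' T (cutoff k) := memScrC'_cutoff k
  have hχ' k : memScrC' T (1 - cutoff k) := memScrC'_one_sub_cutoff k
  have hχ'0 k : ∀ x ∈ Ico (-T) 0, 0 ≤ (1 - cutoff k) x := fun x _ => one_sub_cutoff_nonneg k x
  have htail0 k : ∀ x ∈ Ico (-T) 0, 0 ≤ (γ * (1 - cutoff k)) x := fun x hx =>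
    mul_nonneg (hγ0 x hx) (hχ'0 k x hx)
  -- `S (γ (1 - χₖ)) ≤ C S (1 - χₖ) → 0`
  have htail : Tendsto (fun k => S (γ * (1 - cutoff k))) atTop (𝓝 0) := by
    refine tendsto_of_tendsto_of_tendsto_of_le_of_le tendsto_const_nhds
      (by simpa using S.tendsto_one_sub_cutoff.const_mul |C|)
      (fun k => S.nonneg _ (hγ.mul (hχ' k)) (htail0 k)) fun k => ?_
    rw [← S.map_smul_of_nonneg (abs_nonneg C) (hχ' k) (hχ'0 k)]
    refine S.mono (hγ.mul (hχ' k)) ((hχ' k).smul _) (htail0 k) fun x hx => ?_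
    exact mul_le_mul_of_nonneg_right ((le_abs_self _).trans ((hC x hx).trans (le_abs_self C)))
      (hχ'0 k x hx)
  have hsplit k : S γ = S (γ * cutoff k) + S (γ * (1 - cutoff k)) := by
    rw [← S.map_add _ _ (hγ.mul (hχ k)) (hγ.mul (hχ' k))
      (fun x hx => mul_nonneg (hγ0 x hx) (cutoff_nonneg k x)) (htail0 k)]
    congr 1
    ring
  have h := (tendsto_const_nhds (x := S γ)).sub htail
  rw [sub_zero] at h
  exact h.congr fun k => by linarith [hsplit k]

end PosFunctional

instance {a b : ℝ} : LocallyCompactSpace (Ico a b) := isLocallyClosed_Ico.locallyCompactSpace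

noncomputable def ccExtend {T : ℝ} (f : C_c(Ico (-T) (0:ℝ), ℝ≥0)) : ℝ → ℝ :=
  Function.extend Subtype.val (fun x => (f x : ℝ)) 0

section ccExtend

variable {T : ℝ} (f : C_c(Ico (-T) (0:ℝ), ℝ≥0))

theorem ccExtend_apply (x : Ico (-T) (0:ℝ)) : ccExtend f x = f x :=
  Subtype.val_injective.extend_apply _ _ x

theorem ccExtend_nonneg : ∀ x ∈ Ico (-T) 0, 0 ≤ ccExtend f x := fun x hx => by
  simp [ccExtend_apply f ⟨x, hx⟩]

theorem memScrC'_ccExtend : memScrC' T (ccExtend f) := by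
  obtain ⟨C, hC⟩ := Continuous.bounded_above_of_compact_support
    (NNReal.continuous_coe.comp f.continuous) (f.hasCompactSupport.comp_left NNReal.coe_zero)
  refine ⟨⟨C, fun x hx => ?_⟩, continuousOn_iff_continuous_domRestrict.2 ?_⟩
  · simpa [ccExtend_apply f ⟨x, hx⟩] using hC ⟨x, hx⟩
  · convert NNReal.continuous_coe.comp f.continuous
    funext x
    exact ccExtend_apply f x

end ccExtend

namespace PosFunctional

variable {T : ℝ} (S : PosFunctional T) {γ : ℝ → ℝ}

noncomputable def toCcLinear : C_c(Ico (-T) (0:ℝ), ℝ≥0) →ₗ[ℝ≥0] ℝ≥0 where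
  toFun f := ⟨S (ccExtend f), S.nonneg _ (memScrC'_ccExtend f) (ccExtend_nonneg f)⟩
  map_add' f g := NNReal.eq <| by
    change S (ccExtend (f + g)) = S (ccExtend f) + S (ccExtend g)
    rw [← S.map_add _ _ (memScrC'_ccExtend f) (memScrC'_ccExtend g) (ccExtend_nonneg f)
      (ccExtend_nonneg g)]
    refine S.congr _ _ (memScrC'_ccExtend _) ((memScrC'_ccExtend f).add (memScrC'_ccExtend g))
      fun x hx => ?_
    simp [ccExtend_apply _ ⟨x, hx⟩]
  map_smul' c f := NNReal.eq <| by
    change S (ccExtend (c • f)) = c * S (ccExtend f)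
    rw [← S.map_smul_of_nonneg c.coe_nonneg (memScrC'_ccExtend f) (ccExtend_nonneg f)]
    refine S.congr _ _ (memScrC'_ccExtend _) ((memScrC'_ccExtend f).smul _) fun x hx => ?_
    simp [ccExtend_apply _ ⟨x, hx⟩]

noncomputable def rieszMeasure : Measure (Ico (-T) (0:ℝ)) := NNRealRMK.rieszMeasure S.toCcLinear

theorem lintegral_rieszMeasure_of_eq_zero (hγ : memScrC' T γ) (hγ0 : ∀ x ∈ Ico (-T) 0, 0 ≤ γ x)
    {b : ℝ} (hb : b < 0) (hvan : ∀ x, b < x → γ x = 0) :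
    ∫⁻ x, ENNReal.ofReal (γ x) ∂S.rieszMeasure = ENNReal.ofReal (S γ) := by
  have hK : IsCompact (Subtype.val ⁻¹' Icc (-T) b : Set (Ico (-T) (0:ℝ))) := by
    rw [Subtype.isCompact_iff, Subtype.image_preimage_coe,
      inter_eq_right.2 (Icc_subset_Ico_right hb)]
    exact isCompact_Icc
  let f : C_c(Ico (-T) (0:ℝ), ℝ≥0) :=
    ⟨⟨fun x => (γ x).toNNReal,
      continuous_real_toNNReal.comp hγ.continuous_restrict⟩,
      HasCompactSupport.intro hK fun x hx => by
        simp [hvan x (not_le.1 fun h => hx ⟨x.2.1, h⟩)]⟩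
  have hf : S (ccExtend f) = S γ :=
    S.congr _ _ (memScrC'_ccExtend f) hγ fun x hx => by
      simp [ccExtend_apply f ⟨x, hx⟩, f, hγ0 x hx]
  calc ∫⁻ x, ENNReal.ofReal (γ x) ∂S.rieszMeasure = ∫⁻ x, (f x : ℝ≥0∞) ∂S.rieszMeasure := rfl
    _ = S.toCcLinear f := NNRealRMK.lintegral_rieszMeasure S.toCcLinear f
    _ = ENNReal.ofReal (S γ) := by rw [← hf, ENNReal.ofReal_eq_coe_nnreal]; rfl

theorem lintegral_rieszMeasure (hγ : memScrC' T γ) (hγ0 : ∀ x ∈ Ico (-T) 0, 0 ≤ γ x) :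
    ∫⁻ x, ENNReal.ofReal (γ x) ∂S.rieszMeasure = ENNReal.ofReal (S γ) := by
  have hk k := S.lintegral_rieszMeasure_of_eq_zero (hγ.mul (memScrC'_cutoff k))
    (fun x hx => mul_nonneg (hγ0 x hx) (cutoff_nonneg k x)) (b := -1 / (k + 1))
    (div_neg_of_neg_of_pos (by norm_num) (by positivity)) fun x hx => by simp [cutoff_eq_zero hx.le]
  refine tendsto_nhds_unique ?_ (ENNReal.tendsto_ofReal (S.tendsto_mul_cutoff hγ hγ0))
  simp_rw [← hk]
  refine lintegral_tendsto_of_tendsto_of_monotone (fun k => ?_) (ae_of_all _ fun x => ?_)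
    (ae_of_all _ fun x => ?_)
  · exact (ENNReal.continuous_ofReal.comp (hγ.continuous_restrict.mul ((continuous_cutoff k).comp
      continuous_subtype_val))).aemeasurable
  · exact fun k l hkl => ENNReal.ofReal_le_ofReal
      (mul_le_mul_of_nonneg_left (monotone_cutoff x.2.2 hkl) (hγ0 x x.2))
  · refine tendsto_const_nhds.congr' ?_
    filter_upwards [eventually_forall_cutoff_eq_one x.2.2] with k hk
    simp [hk x le_rfl]

instance : IsFiniteMeasure S.rieszMeasure := by
  have h := S.lintegral_rieszMeasure (γ := 1) (.of_continuous continuous_const)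
    fun _ _ => zero_le_one
  simp only [Pi.one_apply, ENNReal.ofReal_one, lintegral_const, one_mul] at h
  exact ⟨h ▸ ENNReal.ofReal_lt_top⟩

noncomputable def measure : Measure ℝ := S.rieszMeasure.map Subtype.val

instance : IsFiniteMeasure S.measure := Measure.isFiniteMeasure_map _ _

theorem measure_compl : S.measure (Ico (-T) 0)ᶜ = 0 := by
  rw [measure, Measure.map_apply measurable_subtype_coe measurableSet_Ico.compl]
  simp

theorem apply_eq_setIntegral (hγ : memScrC' T γ) (hγ0 : ∀ x ∈ Ico (-T) 0, 0 ≤ γ x) :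
    S γ = ∫ x in Ico (-T) 0, γ x ∂S.measure := by
  rw [Measure.restrict_eq_self_of_ae_mem (s := Ico (-T) 0) (mem_ae_iff.2 S.measure_compl), measure,
    (MeasurableEmbedding.subtype_coe measurableSet_Ico).integral_map,
    integral_eq_lintegral_of_nonneg_ae (f := fun x : Ico (-T) (0:ℝ) => γ x)
      (ae_of_all _ fun x => hγ0 x x.2)
      hγ.continuous_restrict.aestronglyMeasurable,
    S.lintegral_rieszMeasure hγ hγ0, ENNReal.toReal_ofReal (S.nonneg γ hγ hγ0)]

end PosFunctional

def minorants (T : ℝ) (γ : ℝ → ℝ) : Set (ℝ → ℝ) :=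
  {η | memScrC' T η ∧ ∀ x ∈ Ico (-T) 0, 0 ≤ η x ∧ η x ≤ γ x}

noncomputable def positivePart (T : ℝ) (Λ : (ℝ → ℝ) → ℝ) (γ : ℝ → ℝ) : ℝ :=
  sSup (Λ '' minorants T γ)

section minorants

open scoped Pointwise

variable {T : ℝ} {γ ξ : ℝ → ℝ}

theorem self_mem_minorants (hγ : memScrC' T γ) (hγ0 : ∀ x ∈ Ico (-T) 0, 0 ≤ γ x) :
    γ ∈ minorants T γ :=
  ⟨hγ, fun x hx => ⟨hγ0 x hx, le_rfl⟩⟩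

theorem zero_mem_minorants (hγ0 : ∀ x ∈ Ico (-T) 0, 0 ≤ γ x) : 0 ∈ minorants T γ :=
  ⟨.of_continuous continuous_const, fun x hx => ⟨le_rfl, hγ0 x hx⟩⟩

theorem minorants_congr (h : EqOn γ ξ (Ico (-T) 0)) : minorants T γ = minorants T ξ := by
  ext η
  simp only [minorants, mem_ofPred_eq]
  exact and_congr_right fun _ => forall₂_congr fun x hx => by rw [h hx]

/-- Riesz decomposition: `η ≤ γ + ξ` splits as `(η ⊓ γ) + (η - η ⊓ γ)`. -/
theorem minorants_add (hγ : memScrC' T γ) (hγ0 : ∀ x ∈ Ico (-T) 0, 0 ≤ γ x)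
    (hξ0 : ∀ x ∈ Ico (-T) 0, 0 ≤ ξ x) :
    minorants T (γ + ξ) = minorants T γ + minorants T ξ := by
  ext η
  constructor
  · rintro ⟨hη, hb⟩
    refine ⟨η ⊓ γ, ⟨hη.inf hγ, fun x hx => ⟨le_min (hb x hx).1 (hγ0 x hx), min_le_right _ _⟩⟩,
      η - η ⊓ γ, ⟨hη.sub (hη.inf hγ), fun x hx => ⟨sub_nonneg.2 (min_le_left _ _), ?_⟩⟩,
      add_sub_cancel _ _⟩
    have hle : η x ≤ γ x + ξ x := (hb x hx).2
    have := hξ0 x hx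
    change η x - min (η x) (γ x) ≤ ξ x
    rcases min_cases (η x) (γ x) with ⟨h, -⟩ | ⟨h, -⟩ <;> linarith
  · rintro ⟨η₁, ⟨h₁, hb₁⟩, η₂, ⟨h₂, hb₂⟩, rfl⟩
    exact ⟨h₁.add h₂, fun x hx => ⟨add_nonneg (hb₁ x hx).1 (hb₂ x hx).1,
      add_le_add (hb₁ x hx).2 (hb₂ x hx).2⟩⟩

theorem smul_mem_minorants {c : ℝ} (hc : 0 ≤ c) {η : ℝ → ℝ} (hη : η ∈ minorants T γ) :
    c • η ∈ minorants T (c • γ) :=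
  ⟨hη.1.smul c, fun x hx => ⟨mul_nonneg hc (hη.2 x hx).1,
    mul_le_mul_of_nonneg_left (hη.2 x hx).2 hc⟩⟩

end minorants

namespace IsSeqContinuousLinear

open scoped Pointwise

variable {T : ℝ} {Λ : (ℝ → ℝ) → ℝ} (hΛ : IsSeqContinuousLinear T Λ) {γ ξ : ℝ → ℝ}
include hΛ

theorem bddAbove_image_minorants (hγ : memScrC' T γ) : BddAbove (Λ '' minorants T γ) := by
  obtain ⟨M, hM⟩ := hΛ.exists_le
  obtain ⟨C, hC⟩ := hγ.1
  set C' := max C 1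
  have hC' : 0 < C' := lt_max_of_lt_right one_pos
  refine ⟨C' * M, ?_⟩
  rintro _ ⟨η, ⟨hη, hb⟩, rfl⟩
  have hscaled : Λ (C'⁻¹ • η) ≤ M := hM _ (hη.smul _) fun x hx => by
    rw [Pi.smul_apply, smul_eq_mul, abs_mul, abs_inv, abs_of_pos hC', inv_mul_le_iff₀ hC', mul_one,
      abs_of_nonneg (hb x hx).1]
    exact (hb x hx).2.trans ((le_abs_self _).trans ((hC x hx).trans (le_max_left C 1)))
  calc Λ η = C' * Λ (C'⁻¹ • η) := by rw [← hΛ.map_smul _ _ (hη.smul _), smul_inv_smul₀ hC'.ne']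
    _ ≤ C' * M := mul_le_mul_of_nonneg_left hscaled hC'.le

theorem le_positivePart (hγ : memScrC' T γ) (hγ0 : ∀ x ∈ Ico (-T) 0, 0 ≤ γ x) :
    Λ γ ≤ positivePart T Λ γ :=
  le_csSup (hΛ.bddAbove_image_minorants hγ) ⟨γ, self_mem_minorants hγ hγ0, rfl⟩

theorem positivePart_nonneg (hγ : memScrC' T γ) (hγ0 : ∀ x ∈ Ico (-T) 0, 0 ≤ γ x) :
    0 ≤ positivePart T Λ γ :=
  hΛ.map_zero ▸ le_csSup (hΛ.bddAbove_image_minorants hγ) ⟨0, zero_mem_minorants hγ0, rfl⟩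

theorem positivePart_add (hγ : memScrC' T γ) (hξ : memScrC' T ξ)
    (hγ0 : ∀ x ∈ Ico (-T) 0, 0 ≤ γ x) (hξ0 : ∀ x ∈ Ico (-T) 0, 0 ≤ ξ x) :
    positivePart T Λ (γ + ξ) = positivePart T Λ γ + positivePart T Λ ξ := by
  have himage : Λ '' minorants T (γ + ξ) = Λ '' minorants T γ + Λ '' minorants T ξ := by
    rw [minorants_add hγ hγ0 hξ0]
    ext r
    constructor
    · rintro ⟨_, ⟨η₁, h₁, η₂, h₂, rfl⟩, rfl⟩
      exact ⟨_, ⟨η₁, h₁, rfl⟩, _, ⟨η₂, h₂, rfl⟩, (hΛ.map_add _ _ h₁.1 h₂.1).symm⟩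
    · rintro ⟨_, ⟨η₁, h₁, rfl⟩, _, ⟨η₂, h₂, rfl⟩, rfl⟩
      exact ⟨η₁ + η₂, ⟨η₁, h₁, η₂, h₂, rfl⟩, hΛ.map_add _ _ h₁.1 h₂.1⟩
  rw [positivePart, himage, csSup_add ⟨_, mem_image_of_mem _ (zero_mem_minorants hγ0)⟩
    (hΛ.bddAbove_image_minorants hγ) ⟨_, mem_image_of_mem _ (zero_mem_minorants hξ0)⟩
    (hΛ.bddAbove_image_minorants hξ)]
  rfl

theorem positivePart_smul {c : ℝ} (hc : 0 < c) :
    positivePart T Λ (c • γ) = c * positivePart T Λ γ := by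
  have himage : Λ '' minorants T (c • γ) = c • Λ '' minorants T γ := by
    ext r
    constructor
    · rintro ⟨η, hη, rfl⟩
      have hη' := smul_mem_minorants (inv_nonneg.2 hc.le) hη
      rw [inv_smul_smul₀ hc.ne'] at hη'
      refine ⟨_, ⟨_, hη', rfl⟩, ?_⟩
      change c * Λ (c⁻¹ • η) = Λ η
      rw [← hΛ.map_smul _ _ hη'.1, smul_inv_smul₀ hc.ne']
    · rintro ⟨_, ⟨η, hη, rfl⟩, rfl⟩
      exact ⟨c • η, smul_mem_minorants hc.le hη, hΛ.map_smul _ _ hη.1⟩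
  rw [positivePart, himage, Real.sSup_smul_of_nonneg hc.le, smul_eq_mul]
  rfl

theorem tendsto_of_mem_minorants_one_sub_cutoff {η : ℕ → ℝ → ℝ}
    (hη : ∀ k, η k ∈ minorants T (1 - cutoff k)) :
    Tendsto (fun k => Λ (η k)) atTop (𝓝 0) := by
  refine hΛ.tendsto_zero_of_eventually_eq_zero (fun k => (hη k).1) (C := 1) (fun k x hx => ?_)
    fun t ht => ?_
  · have := (hη k).2 x hx
    rw [abs_of_nonneg this.1]
    exact this.2.trans (sub_le_self _ (cutoff_nonneg k x))
  · filter_upwards [eventually_forall_cutoff_eq_one ht] with k hk x hx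
    have := (hη k).2 x ⟨hx.1, hx.2.trans_lt ht⟩
    simp only [Pi.sub_apply, Pi.one_apply, hk x hx.2, sub_self] at this
    exact le_antisymm this.2 this.1

theorem tendsto_positivePart_one_sub_cutoff :
    Tendsto (fun k => positivePart T Λ (1 - cutoff k)) atTop (𝓝 0) := by
  have hnonneg k : ∀ x ∈ Ico (-T) 0, 0 ≤ (1 - cutoff k) x := fun x _ => one_sub_cutoff_nonneg k x
  have hex k : ∃ η ∈ minorants T (1 - cutoff k),
      positivePart T Λ (1 - cutoff k) - 1 / (k + 1) < Λ η := by
    obtain ⟨_, ⟨η, hη, rfl⟩, hlt⟩ := exists_lt_of_lt_csSup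
      ⟨_, mem_image_of_mem _ (zero_mem_minorants (hnonneg k))⟩
      (sub_lt_self (positivePart T Λ (1 - cutoff k)) (by positivity : (0 : ℝ) < 1 / (k + 1)))
    exact ⟨η, hη, hlt⟩
  choose η hη hlt using hex
  have hupper := (hΛ.tendsto_of_mem_minorants_one_sub_cutoff hη).add
    tendsto_one_div_add_atTop_nhds_zero_nat
  rw [add_zero] at hupper
  exact tendsto_of_tendsto_of_tendsto_of_le_of_le tendsto_const_nhds hupper
    (fun k => hΛ.positivePart_nonneg (memScrC'_one_sub_cutoff k) (hnonneg k))
    fun k => by linarith [hlt k]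

noncomputable def posPartFunctional : PosFunctional T where
  toFun := positivePart T Λ
  congr _ _ _ _ h := by rw [positivePart, positivePart, minorants_congr h]
  map_add _ _ hγ hξ hγ0 hξ0 := hΛ.positivePart_add hγ hξ hγ0 hξ0
  map_smul _ _ hc _ _ := hΛ.positivePart_smul hc
  nonneg _ hγ hγ0 := hΛ.positivePart_nonneg hγ hγ0
  tendsto_one_sub_cutoff := hΛ.tendsto_positivePart_one_sub_cutoff

noncomputable def negPartFunctional : PosFunctional T where
  toFun γ := positivePart T Λ γ - Λ γ
  congr _ _ hγ hξ h := by rw [positivePart, positivePart, minorants_congr h, hΛ.congr hγ hξ h]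
  map_add _ _ hγ hξ hγ0 hξ0 := by
    rw [hΛ.positivePart_add hγ hξ hγ0 hξ0, hΛ.map_add _ _ hγ hξ]
    ring
  map_smul _ _ hc hγ _ := by
    rw [hΛ.positivePart_smul hc, hΛ.map_smul _ _ hγ]
    ring
  nonneg _ hγ hγ0 := sub_nonneg.2 (hΛ.le_positivePart hγ hγ0)
  tendsto_one_sub_cutoff := by
    simpa using hΛ.tendsto_positivePart_one_sub_cutoff.sub
      (hΛ.tendsto_of_mem_minorants_one_sub_cutoff fun k =>
        self_mem_minorants (memScrC'_one_sub_cutoff k) fun x _ => one_sub_cutoff_nonneg k x)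

theorem exists_measures_sub : ∃ ν₁ ν₂ : Measure ℝ, IsFiniteMeasure ν₁ ∧ IsFiniteMeasure ν₂ ∧
    ν₁ (Ico (-T) 0)ᶜ = 0 ∧ ν₂ (Ico (-T) 0)ᶜ = 0 ∧ ∀ γ, memScrC' T γ →
      Λ γ = ∫ x in Ico (-T) 0, γ x ∂ν₁ - ∫ x in Ico (-T) 0, γ x ∂ν₂ := by
  set ν₁ := hΛ.posPartFunctional.measure
  set ν₂ := hΛ.negPartFunctional.measure
  refine ⟨ν₁, ν₂, inferInstance, inferInstance, PosFunctional.measure_compl _,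
    PosFunctional.measure_compl _, fun γ hγ => ?_⟩
  have hpos η (hη : memScrC' T η) (hη0 : ∀ x ∈ Ico (-T) 0, 0 ≤ η x) :
      Λ η = ∫ x in Ico (-T) 0, η x ∂ν₁ - ∫ x in Ico (-T) 0, η x ∂ν₂ := by
    rw [← PosFunctional.apply_eq_setIntegral _ hη hη0,
      ← PosFunctional.apply_eq_setIntegral _ hη hη0]
    change Λ η = positivePart T Λ η - (positivePart T Λ η - Λ η)
    ring
  -- shift `γ` by a constant to make it nonnegative
  obtain ⟨C, hC⟩ := hγ.1
  have hc : memScrC' T (fun _ => C) := .of_continuous continuous_const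
  have hc0 : ∀ x ∈ Ico (-T) 0, 0 ≤ C := fun x hx => (abs_nonneg _).trans (hC x hx)
  have hγc0 : ∀ x ∈ Ico (-T) 0, 0 ≤ γ x + C := fun x hx => by linarith [neg_abs_le (γ x), hC x hx]
  have hsplit ν [IsFiniteMeasure ν] : ∫ x in Ico (-T) 0, (γ + fun _ : ℝ => C) x ∂ν =
      ∫ x in Ico (-T) 0, γ x ∂ν + ∫ x in Ico (-T) 0, C ∂ν :=
    integral_add (hγ.integrableOn ν) (hc.integrableOn ν)
  have := hΛ.map_add γ _ hγ hc
  rw [hpos _ (hγ.add hc) hγc0, hpos _ hc hc0, hsplit, hsplit] at this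
  linarith

end IsSeqContinuousLinear

namespace MeasureTheory

variable {α : Type*} [MeasurableSpace α] {a b c d : Measure α}

theorem Measure.toSignedMeasure_sub_eq_iff [IsFiniteMeasure a] [IsFiniteMeasure b]
    [IsFiniteMeasure c] [IsFiniteMeasure d] :
    a.toSignedMeasure - b.toSignedMeasure = c.toSignedMeasure - d.toSignedMeasure ↔
      a + d = c + b := by
  rw [sub_eq_sub_iff_add_eq_add, ← Measure.toSignedMeasure_add, ← Measure.toSignedMeasure_add,
    Measure.toSignedMeasure_eq_toSignedMeasure_iff]

theorem SignedMeasure.eq_posPart_sub_negPart (s : SignedMeasure α) :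
    s = s.toJordanDecomposition.posPart.toSignedMeasure -
      s.toJordanDecomposition.negPart.toSignedMeasure :=
  s.toSignedMeasure_toJordanDecomposition.symm

theorem Measure.MutuallySingular.null_of_add_eq_add {p n : Measure α} (h : p ⟂ₘ n)
    (heq : p + b = c + n) {u : Set α} (hb : b u = 0) (hc : c u = 0) : p u = 0 ∧ n u = 0 := by
  have hr : p.restrict u = n.restrict u := by
    simpa [Measure.restrict_add, Measure.restrict_eq_zero.2 hb, Measure.restrict_eq_zero.2 hc]
      using congrArg (·.restrict u) heq
  have hp : p.restrict u = 0 := by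
    rw [← Measure.MutuallySingular.self_iff]
    simpa [hr] using (h.restrict u).symm.restrict u
  rw [← Measure.restrict_eq_zero, ← Measure.restrict_eq_zero, ← hr]
  exact ⟨hp, hp⟩

theorem setIntegral_sub_eq_of_add_eq_add (h : a + d = c + b) {s : Set α} {f : α → ℝ}
    (ha : IntegrableOn f s a) (hb : IntegrableOn f s b) (hc : IntegrableOn f s c)
    (hd : IntegrableOn f s d) :
    ∫ x in s, f x ∂a - ∫ x in s, f x ∂b = ∫ x in s, f x ∂c - ∫ x in s, f x ∂d := by
  have := congrArg (fun m => ∫ x in s, f x ∂m) h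
  simp only [Measure.restrict_add] at this
  rw [integral_add_measure ha hd, integral_add_measure hc hb] at this
  linarith

end MeasureTheory

theorem measure_eq_of_setIntegral_eq {T : ℝ} {m₁ m₂ : Measure ℝ} [IsFiniteMeasure m₁]
    [IsFiniteMeasure m₂] (h₁ : m₁ (Ico (-T) 0)ᶜ = 0) (h₂ : m₂ (Ico (-T) 0)ᶜ = 0)
    (h : ∀ γ, memScrC' T γ → ∫ x in Ico (-T) 0, γ x ∂m₁ = ∫ x in Ico (-T) 0, γ x ∂m₂) :
    m₁ = m₂ := by
  refine ext_of_forall_integral_eq_of_IsFiniteMeasure fun f => ?_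
  rw [← Measure.restrict_eq_self_of_ae_mem (s := Ico (-T) 0) (mem_ae_iff.2 h₁),
    ← Measure.restrict_eq_self_of_ae_mem (s := Ico (-T) 0) (mem_ae_iff.2 h₂)]
  exact h f (.of_continuous f.continuous)

theorem add_eq_add_of_setIntegral_sub_eq {T : ℝ} {a b c d : Measure ℝ} [IsFiniteMeasure a]
    [IsFiniteMeasure b] [IsFiniteMeasure c] [IsFiniteMeasure d]
    (ha : a (Ico (-T) 0)ᶜ = 0) (hb : b (Ico (-T) 0)ᶜ = 0)
    (hc : c (Ico (-T) 0)ᶜ = 0) (hd : d (Ico (-T) 0)ᶜ = 0)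
    (h : ∀ γ, memScrC' T γ → ∫ x in Ico (-T) 0, γ x ∂a - ∫ x in Ico (-T) 0, γ x ∂b =
      ∫ x in Ico (-T) 0, γ x ∂c - ∫ x in Ico (-T) 0, γ x ∂d) :
    a + d = c + b := by
  refine measure_eq_of_setIntegral_eq (T := T) (by simp [ha, hd]) (by simp [hb, hc])
    fun γ hγ => ?_
  rw [Measure.restrict_add, Measure.restrict_add,
    integral_add_measure (hγ.integrableOn a) (hγ.integrableOn d),
    integral_add_measure (hγ.integrableOn c) (hγ.integrableOn b)]
  linarith [h γ hγ]

theorem stmt9_general (T : ℝ) (Λ : (ℝ → ℝ) → ℝ)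
    (hadd : ∀ γ ξ, memScrC' T γ → memScrC' T ξ → Λ (γ + ξ) = Λ γ + Λ ξ)
    (hsmul : ∀ (c : ℝ) γ, memScrC' T γ → Λ (c • γ) = c * Λ γ)
    (hcont : ∀ (γk : ℕ → ℝ → ℝ) (γ : ℝ → ℝ),
      (∀ k, memScrC' T (γk k)) → memScrC' T γ →
      (∃ C, ∀ k, ∀ x ∈ Set.Ico (-T) (0:ℝ), |γk k x| ≤ C) →
      (∀ K ⊆ Set.Ico (-T) (0:ℝ), IsCompact K → TendstoUniformlyOn γk γ atTop K) →
      Tendsto (fun k => Λ (γk k)) atTop (𝓝 (Λ γ))) :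
    ∃! μ : MeasureTheory.SignedMeasure ℝ,
      μ.toJordanDecomposition.posPart (Set.Ico (-T) 0)ᶜ = 0 ∧
      μ.toJordanDecomposition.negPart (Set.Ico (-T) 0)ᶜ = 0 ∧
      ∀ γ, memScrC' T γ →
        Λ γ = (∫ x in Set.Ico (-T) 0, γ x ∂μ.toJordanDecomposition.posPart) -
              ∫ x in Set.Ico (-T) 0, γ x ∂μ.toJordanDecomposition.negPart := by
  obtain ⟨ν₁, ν₂, _, _, h₁, h₂, hΛ⟩ :=
    IsSeqContinuousLinear.exists_measures_sub ⟨hadd, hsmul, hcont⟩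
  set μ := ν₁.toSignedMeasure - ν₂.toSignedMeasure
  have hμ : μ.toJordanDecomposition.posPart + ν₂ = ν₁ + μ.toJordanDecomposition.negPart :=
    Measure.toSignedMeasure_sub_eq_iff.1 μ.eq_posPart_sub_negPart.symm
  obtain ⟨hp, hn⟩ := μ.toJordanDecomposition.mutuallySingular.null_of_add_eq_add hμ h₂ h₁
  refine ⟨μ, ⟨hp, hn, fun γ hγ => ?_⟩, fun μ' ⟨hp', hn', hΛ'⟩ => ?_⟩
  · rw [hΛ γ hγ, setIntegral_sub_eq_of_add_eq_add hμ (hγ.integrableOn _) (hγ.integrableOn _)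
      (hγ.integrableOn _) (hγ.integrableOn _)]
  · rw [μ'.eq_posPart_sub_negPart, Measure.toSignedMeasure_sub_eq_iff]
    exact add_eq_add_of_setIntegral_sub_eq hp' hn' h₁ h₂ fun γ hγ =>
      (hΛ' γ hγ).symm.trans (hΛ γ hγ)

/-- Riesz-type representation for `𝒞([-T,0[)`: every linear functional `Λ`, sequentially
continuous for the convergence of `𝒞([-T,0[)`, is represented by a unique finite signed
Borel measure `μ` on `[-T,0]` with `μ({0}) = 0` (i.e. carried by `[-T,0[`):
`Λγ = ∫_{[-T,0[} γ dμ`. -/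
theorem stmt9 (T : ℝ) (hT : 0 < T) (Λ : (ℝ → ℝ) → ℝ)
    (hadd : ∀ γ ξ, memScrC' T γ → memScrC' T ξ → Λ (γ + ξ) = Λ γ + Λ ξ)
    (hsmul : ∀ (c : ℝ) γ, memScrC' T γ → Λ (c • γ) = c * Λ γ)
    (hcont : ∀ (γk : ℕ → ℝ → ℝ) (γ : ℝ → ℝ),
      (∀ k, memScrC' T (γk k)) → memScrC' T γ →
      (∃ C, ∀ k, ∀ x ∈ Set.Ico (-T) (0:ℝ), |γk k x| ≤ C) →
      (∀ K ⊆ Set.Ico (-T) (0:ℝ), IsCompact K → TendstoUniformlyOn γk γ atTop K) →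
      Tendsto (fun k => Λ (γk k)) atTop (𝓝 (Λ γ))) :
    ∃! μ : MeasureTheory.SignedMeasure ℝ,
      μ.toJordanDecomposition.posPart (Set.Ico (-T) 0)ᶜ = 0 ∧
      μ.toJordanDecomposition.negPart (Set.Ico (-T) 0)ᶜ = 0 ∧
      ∀ γ, memScrC' T γ →
        Λ γ = (∫ x in Set.Ico (-T) 0, γ x ∂μ.toJordanDecomposition.posPart) -
              ∫ x in Set.Ico (-T) 0, γ x ∂μ.toJordanDecomposition.negPart :=
  stmt9_general T Λ hadd hsmul hcont
end

section
/- Let η : [-T,0] → ℝ be a continuous function whose deterministic quadratic variation [η] on [-T,0] exists, i.e., (1/ε)∫₀^x (η(s+ε) − η(s))² ds converges for every x ∈ [-T,0] to a (continuous) function [η](x). Then for every ε > 0 define the bounded linear operator T_ε : L²([-T,0]²) → ℝ by T_ε g = ∫_{[-T,0]²} g(x,y) (η(x)−η(x−ε))(η(y)−η(y−ε))/ε dx dy. Then sup_{0<ε<1} ‖T_ε‖ < ∞ and T_ε g → 0 as ε → 0⁺ for every g ∈ L²([-T,0]²). -/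
/-!
By Cauchy–Schwarz on `[-T,0]²`, `|T_ε g| ≤ ‖g‖₂ · ∫ (η x - η (x - ε))² dx / ε`, and the quadratic
variation at the single point `-T` bounds the last integral by `M ε`: this is the uniform bound.
For `g` smooth with compact support, moving the increment in `y` onto `g` by a change of variables
makes the inner integral `O(ε)`, so `|T_ε g| ≤ C ∫ |η x - η (x - ε)| dx = O(√ε)`. Such `g` are dense
in `L²`, and the uniform bound carries the convergence over to all of `L²`.
-/

open MeasureTheory Filter Topology Set
open scoped NNReal ENNReal RealInnerProductSpace

section L2

variable {α β : Type*} [MeasurableSpace α] [MeasurableSpace β] {μ : Measure α} {ν : Measure β}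

theorem integral_mul_eq_inner_toLp {u v : α → ℝ} (hu : MemLp u 2 μ) (hv : MemLp v 2 μ) :
    ∫ a, u a * v a ∂μ = ⟪hu.toLp u, hv.toLp v⟫ := by
  rw [L2.inner_def]
  refine integral_congr_ae ?_
  filter_upwards [hu.coeFn_toLp, hv.coeFn_toLp] with x hux hvx
  simp [hux, hvx, mul_comm]

theorem abs_integral_mul_le_eLpNorm_two {u v : α → ℝ} (hu : MemLp u 2 μ) (hv : MemLp v 2 μ) :
    |∫ a, u a * v a ∂μ| ≤ (eLpNorm u 2 μ).toReal * (eLpNorm v 2 μ).toReal := by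
  rw [integral_mul_eq_inner_toLp hu hv, ← Lp.norm_toLp u hu, ← Lp.norm_toLp v hv]
  exact abs_real_inner_le_norm _ _

theorem MeasureTheory.MemLp.toReal_eLpNorm_two_eq_sqrt {u : α → ℝ} (hu : MemLp u 2 μ) :
    (eLpNorm u 2 μ).toReal = √(∫ a, u a ^ 2 ∂μ) := by
  simp_rw [sq, integral_mul_eq_inner_toLp hu hu, real_inner_self_eq_norm_mul_norm, Lp.norm_toLp,
    Real.sqrt_mul_self ENNReal.toReal_nonneg]

theorem integral_abs_le_sqrt_mul_sqrt [IsFiniteMeasure μ] {u : α → ℝ} (hu : MemLp u 2 μ) :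
    ∫ a, |u a| ∂μ ≤ √(μ.real univ) * √(∫ a, u a ^ 2 ∂μ) := by
  have hone : MemLp (fun _ => (1 : ℝ)) 2 μ := memLp_const 1
  have hu' : MemLp (fun a => |u a|) 2 μ := hu.abs
  have := abs_integral_mul_le_eLpNorm_two hu' hone
  rw [hu'.toReal_eLpNorm_two_eq_sqrt, hone.toReal_eLpNorm_two_eq_sqrt] at this
  simpa [mul_comm] using (le_abs_self _).trans this

theorem eLpNorm_mul_prod [SFinite ν] {p : ℝ≥0∞} (hp0 : p ≠ 0) (hp : p ≠ ∞) {u : α → ℝ}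
    {v : β → ℝ} (hu : AEStronglyMeasurable u μ) (hv : AEStronglyMeasurable v ν) :
    eLpNorm (fun z => u z.1 * v z.2) p (μ.prod ν) = eLpNorm u p μ * eLpNorm v p ν := by
  have hp' : 0 ≤ p.toReal := ENNReal.toReal_nonneg
  simp_rw [eLpNorm_eq_lintegral_rpow_enorm_toReal hp0 hp, enorm_mul,
    ENNReal.mul_rpow_of_nonneg _ _ hp']
  rw [lintegral_prod_mul (hu.enorm.pow_const _) (hv.enorm.pow_const _),
    ENNReal.mul_rpow_of_nonneg _ _ (by positivity)]

theorem MeasureTheory.MemLp.mul_prod [SFinite ν] {p : ℝ≥0∞} {u : α → ℝ} {v : β → ℝ} (hp0 : p ≠ 0)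
    (hp : p ≠ ∞) (hu : MemLp u p μ) (hv : MemLp v p ν) :
    MemLp (fun z => u z.1 * v z.2) p (μ.prod ν) := by
  refine ⟨hu.1.comp_fst.mul hv.1.comp_snd, ?_⟩
  rw [eLpNorm_mul_prod hp0 hp hu.1 hv.1]
  exact ENNReal.mul_lt_top hu.2 hv.2

end L2

theorem volume_restrict_prod {α β : Type*} [MeasureSpace α] [MeasureSpace β]
    [SFinite (volume : Measure α)] [SFinite (volume : Measure β)] (s : Set α) (t : Set β) :
    volume.restrict (s ×ˢ t) = (volume.restrict s).prod (volume.restrict t) := by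
  rw [Measure.prod_restrict, Measure.volume_eq_prod]

theorem tendsto_zero_of_forall_approx {ι : Type*} {l : Filter ι} {f : ι → ℝ}
    (h : ∀ θ > 0, ∃ g : ι → ℝ, Tendsto g l (𝓝 0) ∧ ∀ᶠ i in l, |f i - g i| ≤ θ) :
    Tendsto f l (𝓝 0) := by
  refine Metric.tendsto_nhds.2 fun θ hθ => ?_
  obtain ⟨g, hg, hfg⟩ := h (θ / 2) (half_pos hθ)
  filter_upwards [Metric.tendsto_nhds.1 hg (θ / 2) (half_pos hθ), hfg] with i hgi hfgi
  rw [Real.dist_eq, sub_zero] at hgi ⊢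
  linarith [abs_sub_abs_le_abs_sub (f i) (g i)]

theorem exists_forall_pos_le_mul {F : ℝ → ℝ} {C D : ℝ}
    (hsmall : ∀ᶠ ε in 𝓝[>] 0, F ε ≤ C * ε) (hbdd : ∀ ε, F ε ≤ D) :
    ∃ M, ∀ ε > 0, F ε ≤ M * ε := by
  obtain ⟨δ, hδ, hFδ⟩ := mem_nhdsGT_iff_exists_Ioo_subset.1 hsmall
  refine ⟨max C (max D 0 / δ), fun ε hε => ?_⟩
  rcases lt_or_ge ε δ with hεδ | hδε
  · exact (hFδ ⟨hε, hεδ⟩).trans (mul_le_mul_of_nonneg_right (le_max_left _ _) hε.le)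
  · calc F ε ≤ max D 0 / δ * δ := by
          rw [div_mul_cancel₀ _ hδ.ne']; exact (hbdd ε).trans (le_max_left _ _)
      _ ≤ max C (max D 0 / δ) * ε :=
          mul_le_mul (le_max_right _ _) hδε (le_of_lt hδ)
            ((div_nonneg (le_max_right D 0) (le_of_lt hδ)).trans (le_max_right _ _))

section RealLine

theorem Measurable.intervalIntegrable_of_abs_le {f : ℝ → ℝ} (hf : Measurable f) {C : ℝ}
    (hC : ∀ x, |f x| ≤ C) (a b : ℝ) : IntervalIntegrable f volume a b :=
  (intervalIntegrable_iff).2 <| Measure.integrableOn_of_bounded measure_Ioc_lt_top.ne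
    hf.aestronglyMeasurable (ae_of_all _ hC)

theorem abs_intervalIntegral_le_of_abs_le {f : ℝ → ℝ} {a b C : ℝ} (hab : a ≤ b)
    (hC : ∀ x, |f x| ≤ C) : |∫ x in a..b, f x| ≤ C * (b - a) := by
  have := intervalIntegral.norm_integral_le_of_norm_le_const (a := a) (b := b) (f := f)
    fun x _ => (Real.norm_eq_abs _).trans_le (hC x)
  rwa [Real.norm_eq_abs, abs_of_nonneg (sub_nonneg.2 hab)] at this

theorem measurable_and_bounded_of_continuousOn_Icc {a b : ℝ} (hab : a ≤ b) {η : ℝ → ℝ}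
    (hη : ContinuousOn η (Icc a b)) (hleft : ∀ x < a, η x = 0) (hright : ∀ x ≥ b, η x = η b) :
    Measurable η ∧ ∃ B, ∀ x, |η x| ≤ B := by
  have heq : η = (Ici a).indicator fun x => η (projIcc a b hab x) := by
    ext x
    rcases lt_or_ge x a with hxa | hax
    · simp [hxa, hleft x hxa]
    rcases le_total x b with hxb | hbx
    · simp [hax, projIcc_of_mem hab ⟨hax, hxb⟩]
    · simp [hax, hright x hbx, projIcc_of_right_le hab hbx]
  have hcont : Continuous fun x => η (projIcc a b hab x) :=
    hη.comp_continuous continuous_projIcc.subtype_val fun x => (projIcc a b hab x).2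
  obtain ⟨B, hB⟩ := isCompact_Icc.exists_bound_of_continuousOn hη
  refine ⟨heq ▸ hcont.measurable.indicator measurableSet_Ici, max B 0, fun x => ?_⟩
  rw [heq]
  by_cases hx : x ∈ Ici a
  · simpa [indicator_of_mem hx] using (hB _ (projIcc a b hab x).2).trans (le_max_left B 0)
  · simp [indicator_of_notMem hx]

variable {η : ℝ → ℝ} {B : ℝ}

theorem abs_sub_le_of_abs_le (hB : ∀ x, |η x| ≤ B) (x y : ℝ) : |η x - η y| ≤ 2 * B := by
  linarith [abs_sub (η x) (η y), hB x, hB y]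

theorem sq_sub_le_of_abs_le (hB : ∀ x, |η x| ≤ B) (x y : ℝ) :
    (η x - η y) ^ 2 ≤ (2 * B) ^ 2 := by
  rw [← sq_abs]
  exact pow_le_pow_left₀ (abs_nonneg _) (abs_sub_le_of_abs_le hB x y) 2

theorem integral_sq_sub_shift_le {a b ε : ℝ} (hη : Measurable η) (hB : ∀ x, |η x| ≤ B)
    (hε : 0 ≤ ε) :
    ∫ x in a..b, (η x - η (x - ε)) ^ 2 ≤ (2 * B) ^ 2 * ε + ∫ s in a..b, (η (s + ε) - η s) ^ 2 := by
  set f : ℝ → ℝ := fun s => (η (s + ε) - η s) ^ 2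
  have hf : ∀ c d, IntervalIntegrable f volume c d :=
    ((hη.comp (measurable_add_const ε)).sub hη).pow_const 2 |>.intervalIntegrable_of_abs_le
      (fun s => by rw [abs_of_nonneg (sq_nonneg _)]; exact sq_sub_le_of_abs_le hB _ _)
  have hshift : ∫ x in a..b, (η x - η (x - ε)) ^ 2 = ∫ s in a - ε..b - ε, f s := by
    simp only [f, ← intervalIntegral.integral_comp_sub_right, sub_add_cancel]
  have hleft : ∫ s in a - ε..a, f s ≤ (2 * B) ^ 2 * ε := by
    have := abs_intervalIntegral_le_of_abs_le (a := a - ε) (b := a) (f := f) (by linarith)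
      fun s => by rw [abs_of_nonneg (sq_nonneg _)]; exact sq_sub_le_of_abs_le hB _ _
    rw [sub_sub_cancel] at this
    exact (le_abs_self _).trans this
  have hright : 0 ≤ ∫ s in b - ε..b, f s :=
    intervalIntegral.integral_nonneg (by linarith) fun s _ => sq_nonneg _
  have hsplit₁ := intervalIntegral.integral_add_adjacent_intervals (hf (a - ε) a) (hf a (b - ε))
  have hsplit₂ := intervalIntegral.integral_add_adjacent_intervals (hf a (b - ε)) (hf (b - ε) b)
  linarith

theorem exists_integral_sq_sub_shift_le_mul {a b q : ℝ} (hab : a ≤ b) (hη : Measurable η)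
    (hB : ∀ x, |η x| ≤ B)
    (hqv : Tendsto (fun ε => (1 / ε) * ∫ s in a..b, (η (s + ε) - η s) ^ 2) (𝓝[>] 0) (𝓝 q)) :
    ∃ M, ∀ ε > 0, ∫ x in Icc a b, (η x - η (x - ε)) ^ 2 ≤ M * ε := by
  simp_rw [integral_Icc_eq_integral_Ioc, ← intervalIntegral.integral_of_le hab]
  refine exists_forall_pos_le_mul (C := (2 * B) ^ 2 + (q + 1)) (D := (2 * B) ^ 2 * (b - a))
    ?_ fun ε => ?_
  · filter_upwards [hqv.eventually (eventually_lt_nhds (lt_add_one q)), self_mem_nhdsWithin]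
      with ε hqvε (hε : 0 < ε)
    rw [one_div_mul_eq_div, div_lt_iff₀ hε] at hqvε
    linarith [integral_sq_sub_shift_le hη hB hε.le (a := a) (b := b)]
  · refine (le_abs_self _).trans (abs_intervalIntegral_le_of_abs_le hab fun x => ?_)
    rw [abs_of_nonneg (sq_nonneg _)]
    exact sq_sub_le_of_abs_le hB _ _

theorem intervalIntegral_comp_sub_eq_of_eq_zero {f : ℝ → ℝ} {a b ε : ℝ} (hε : 0 ≤ ε)
    (hf : ∀ y < a, f y = 0) (hfi : ∀ c d, IntervalIntegrable f volume c d) :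
    ∫ y in a..b, f (y - ε) = ∫ y in a..b - ε, f y := by
  have hzero : ∫ y in a - ε..a, f y = 0 := by
    rw [← intervalIntegral.integral_zero]
    refine intervalIntegral.integral_congr_ae ?_
    filter_upwards [volume.ae_ne a] with y hya hy
    rw [uIoc_of_le (by linarith)] at hy
    exact hf y (lt_of_le_of_ne hy.2 hya)
  rw [intervalIntegral.integral_comp_sub_right f ε,
    ← intervalIntegral.integral_add_adjacent_intervals (hfi _ a) (hfi a _), hzero, zero_add]

/-- Summation by parts: the increment `η - η(· - ε)` is moved onto the Lipschitz factor `h`. -/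
theorem abs_integral_mul_sub_shift_le {a b ε K : ℝ} {L : ℝ≥0} {h : ℝ → ℝ}
    (hε : 0 ≤ ε) (hεab : ε ≤ b - a) (hh : LipschitzWith L h) (hK : ∀ y, |h y| ≤ K)
    (hη : Measurable η) (hB : ∀ y, |η y| ≤ B) (hleft : ∀ y < a, η y = 0) :
    |∫ y in a..b, h y * (η y - η (y - ε))| ≤ (L * (b - a) + K) * B * ε := by
  have hB0 : 0 ≤ B := (abs_nonneg _).trans (hB 0)
  have hprod : ∀ {u v : ℝ → ℝ}, Measurable u → Measurable v → (∀ y, |u y| ≤ K) →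
      (∀ y, |v y| ≤ B) → ∀ c d, IntervalIntegrable (fun y => u y * v y) volume c d :=
    fun hu hv huK hvB => (hu.mul hv).intervalIntegrable_of_abs_le (C := K * B) fun y => by
      simp only [Pi.mul_apply, abs_mul]
      exact mul_le_mul (huK y) (hvB y) (abs_nonneg _) ((abs_nonneg _).trans (huK y))
  have hm : Measurable h := hh.continuous.measurable
  have hf₁ := hprod hm hη hK hB
  have hf₂ := hprod (u := fun y => h (y + ε)) (hm.comp (measurable_add_const ε)) hη
    (fun y => hK (y + ε)) hB
  have hf₃ := hprod (v := fun y => η (y - ε)) hm (hη.comp (measurable_sub_const ε)) hK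
    (fun y => hB (y - ε))
  have hshift : ∫ y in a..b, h y * η (y - ε) = ∫ y in a..b - ε, h (y + ε) * η y := by
    simpa only [sub_add_cancel] using intervalIntegral_comp_sub_eq_of_eq_zero (b := b) hε
      (fun y hy => by rw [hleft y hy, mul_zero]) hf₂
  have hdiff : |∫ y in a..b - ε, (h y * η y - h (y + ε) * η y)| ≤ L * ε * B * (b - ε - a) := by
    refine abs_intervalIntegral_le_of_abs_le (by linarith) fun y => ?_
    have hLip : |h y - h (y + ε)| ≤ L * ε := by
      simpa [Real.dist_eq, abs_of_nonneg hε] using hh.dist_le_mul y (y + ε)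
    rw [← sub_mul, abs_mul]
    exact mul_le_mul hLip (hB y) (abs_nonneg _) (by positivity)
  have hend : |∫ y in b - ε..b, h y * η y| ≤ K * B * ε := by
    simpa only [sub_sub_cancel] using abs_intervalIntegral_le_of_abs_le (b := b) (a := b - ε)
      (by linarith) fun y => by
        rw [abs_mul]; exact mul_le_mul (hK y) (hB y) (abs_nonneg _) ((abs_nonneg _).trans (hK y))
  have hsplit : ∫ y in a..b, h y * (η y - η (y - ε))
      = (∫ y in a..b - ε, (h y * η y - h (y + ε) * η y)) + ∫ y in b - ε..b, h y * η y := by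
    simp only [mul_sub]
    rw [intervalIntegral.integral_sub (hf₁ a b) (hf₃ a b), hshift,
      intervalIntegral.integral_sub (hf₁ a _) (hf₂ a _),
      ← intervalIntegral.integral_add_adjacent_intervals (hf₁ a (b - ε)) (hf₁ (b - ε) b)]
    ring
  rw [hsplit]
  calc _ ≤ L * ε * B * (b - ε - a) + K * B * ε := (abs_add_le _ _).trans (add_le_add hdiff hend)
    _ ≤ L * ε * B * (b - a) + K * B * ε := by gcongr; linarith
    _ = (L * (b - a) + K) * B * ε := by ring

end RealLine

section IncrementOperator

variable {η : ℝ → ℝ} {a b ε B : ℝ}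

/-- The operator `T_ε` of the paper, acting on functions on the square `[a, b]²`. -/
noncomputable def incrementOperator (η : ℝ → ℝ) (a b ε : ℝ) (g : ℝ × ℝ → ℝ) : ℝ :=
  ∫ p in Icc a b ×ˢ Icc a b, g p * (η p.1 - η (p.1 - ε)) * (η p.2 - η (p.2 - ε)) / ε

theorem incrementOperator_eq_integral_prod (g : ℝ × ℝ → ℝ) :
    incrementOperator η a b ε g =
      (∫ z, g z * ((η z.1 - η (z.1 - ε)) * (η z.2 - η (z.2 - ε)))
        ∂(volume.restrict (Icc a b)).prod (volume.restrict (Icc a b))) / ε := by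
  rw [incrementOperator, volume_restrict_prod, ← integral_div]
  simp_rw [mul_assoc]

theorem memLp_two_sub_shift (hη : Measurable η) (hB : ∀ x, |η x| ≤ B) :
    MemLp (fun x => η x - η (x - ε)) 2 (volume.restrict (Icc a b)) :=
  MemLp.of_bound (hη.sub (hη.comp (measurable_sub_const ε))).aestronglyMeasurable (2 * B)
    (ae_of_all _ fun x => abs_sub_le_of_abs_le hB x (x - ε))

theorem incrementOperator_sub (hη : Measurable η) (hB : ∀ x, |η x| ≤ B) {g₁ g₂ : ℝ × ℝ → ℝ}
    (hg₁ : MemLp g₁ 2 (volume.restrict (Icc a b ×ˢ Icc a b)))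
    (hg₂ : MemLp g₂ 2 (volume.restrict (Icc a b ×ˢ Icc a b))) :
    incrementOperator η a b ε (g₁ - g₂) =
      incrementOperator η a b ε g₁ - incrementOperator η a b ε g₂ := by
  have hφ := memLp_two_sub_shift (a := a) (b := b) (ε := ε) hη hB
  have hφφ := hφ.mul_prod two_ne_zero ENNReal.ofNat_ne_top hφ
  rw [volume_restrict_prod] at hg₁ hg₂
  have hsub := integral_sub (hg₁.integrable_mul hφφ) (hg₂.integrable_mul hφφ)
  simp only [Pi.mul_apply] at hsub
  simp only [incrementOperator_eq_integral_prod, ← sub_div, ← hsub, Pi.sub_apply]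
  simp only [sub_mul]

theorem abs_incrementOperator_le {M : ℝ} (hε : 0 < ε) (hη : Measurable η)
    (hB : ∀ x, |η x| ≤ B) (hM : ∫ x in Icc a b, (η x - η (x - ε)) ^ 2 ≤ M * ε)
    {g : ℝ × ℝ → ℝ} (hg : MemLp g 2 (volume.restrict (Icc a b ×ˢ Icc a b))) :
    |incrementOperator η a b ε g| ≤
      M * (eLpNorm g 2 (volume.restrict (Icc a b ×ˢ Icc a b))).toReal := by
  have hφ := memLp_two_sub_shift (a := a) (b := b) (ε := ε) hη hB
  rw [volume_restrict_prod] at hg ⊢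
  rw [incrementOperator_eq_integral_prod, abs_div, abs_of_pos hε, div_le_iff₀ hε]
  calc _ ≤ _ := abs_integral_mul_le_eLpNorm_two hg (hφ.mul_prod two_ne_zero ENNReal.ofNat_ne_top hφ)
    _ = (eLpNorm g 2 _).toReal * ∫ x in Icc a b, (η x - η (x - ε)) ^ 2 := by
      rw [eLpNorm_mul_prod two_ne_zero ENNReal.ofNat_ne_top hφ.1 hφ.1, ENNReal.toReal_mul,
        hφ.toReal_eLpNorm_two_eq_sqrt, Real.mul_self_sqrt (integral_nonneg fun x => sq_nonneg _)]
    _ ≤ (eLpNorm g 2 _).toReal * (M * ε) := by gcongr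
    _ = M * (eLpNorm g 2 _).toReal * ε := by ring

theorem abs_incrementOperator_le_of_lipschitz {K : ℝ} {L : ℝ≥0} {g : ℝ × ℝ → ℝ}
    (hε : 0 < ε) (hεab : ε ≤ b - a) (hη : Measurable η) (hB : ∀ x, |η x| ≤ B)
    (hleft : ∀ x < a, η x = 0) (hL : LipschitzWith L g) (hK : ∀ p, |g p| ≤ K) :
    |incrementOperator η a b ε g| ≤
      (L * (b - a) + K) * B * √(b - a) * √(∫ x in Icc a b, (η x - η (x - ε)) ^ 2) := by
  set μ := volume.restrict (Icc a b)
  set φ : ℝ → ℝ := fun x => η x - η (x - ε)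
  set C := (L * (b - a) + K) * B
  have hab : a ≤ b := by linarith
  have hφ : MemLp φ 2 μ := memLp_two_sub_shift hη hB
  have hg : MemLp g 2 (μ.prod μ) :=
    MemLp.of_bound hL.continuous.aestronglyMeasurable K (ae_of_all _ hK)
  have hinner : ∀ x, |∫ y, g (x, y) * (φ x * φ y) ∂μ| ≤ C * ε * |φ x| := by
    intro x
    have hslice := abs_integral_mul_sub_shift_le hε.le hεab
      (hL.comp (LipschitzWith.prodMk_left x)) (fun y => hK (x, y)) hη hB hleft
    rw [mul_one] at hslice
    simp_rw [mul_left_comm _ (φ x), integral_const_mul, abs_mul, μ, integral_Icc_eq_integral_Ioc,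
      ← intervalIntegral.integral_of_le hab]
    rw [mul_comm]
    exact mul_le_mul_of_nonneg_right hslice (abs_nonneg _)
  have hint : Integrable (fun z => g z * (φ z.1 * φ z.2)) (μ.prod μ) :=
    hg.integrable_mul (hφ.mul_prod two_ne_zero ENNReal.ofNat_ne_top hφ)
  rw [incrementOperator_eq_integral_prod, integral_prod _ hint, abs_div, abs_of_pos hε,
    div_le_iff₀ hε]
  calc _ ≤ ∫ x, C * ε * |φ x| ∂μ := by
        rw [← Real.norm_eq_abs]
        exact norm_integral_le_of_norm_le ((hφ.integrable one_le_two).abs.const_mul _)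
          (ae_of_all _ hinner)
    _ = C * ε * ∫ x, |φ x| ∂μ := integral_const_mul _ _
    _ ≤ C * ε * (√(b - a) * √(∫ x in Icc a b, φ x ^ 2)) := by
        have hC : 0 ≤ C := mul_nonneg (add_nonneg (by positivity) ((abs_nonneg _).trans (hK 0)))
          ((abs_nonneg _).trans (hB 0))
        refine mul_le_mul_of_nonneg_left ?_ (mul_nonneg hC hε.le)
        simpa [μ, Real.volume_real_Icc_of_le hab] using integral_abs_le_sqrt_mul_sqrt hφ
    _ = C * √(b - a) * √(∫ x in Icc a b, φ x ^ 2) * ε := by ring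

theorem tendsto_incrementOperator_of_contDiff {M : ℝ} (hab : a < b) (hη : Measurable η)
    (hB : ∀ x, |η x| ≤ B) (hleft : ∀ x < a, η x = 0)
    (hM : ∀ ε > 0, ∫ x in Icc a b, (η x - η (x - ε)) ^ 2 ≤ M * ε) {g : ℝ × ℝ → ℝ}
    (hg : ContDiff ℝ 1 g) (hgc : HasCompactSupport g) :
    Tendsto (fun ε => incrementOperator η a b ε g) (𝓝[>] 0) (𝓝 0) := by
  obtain ⟨L, hL⟩ := hg.lipschitzWith_of_hasCompactSupport hgc one_ne_zero
  obtain ⟨K, hK⟩ := hg.continuous.bounded_above_of_compact_support hgc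
  simp only [Real.norm_eq_abs] at hK
  set C := (L * (b - a) + K) * B * √(b - a)
  have hC : 0 ≤ C := mul_nonneg (mul_nonneg (add_nonneg (by positivity)
    ((abs_nonneg _).trans (hK 0))) ((abs_nonneg _).trans (hB 0))) (Real.sqrt_nonneg _)
  have hbound : Tendsto (fun ε => C * √(M * ε)) (𝓝[>] 0) (𝓝 0) := by
    have hcont : Continuous fun ε => C * √(M * ε) := by fun_prop
    simpa using (hcont.tendsto 0).mono_left nhdsWithin_le_nhds
  refine squeeze_zero_norm' ?_ hbound
  filter_upwards [Ioo_mem_nhdsGT (sub_pos.2 hab)] with ε ⟨hε, hεab⟩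
  exact (abs_incrementOperator_le_of_lipschitz hε hεab.le hη hB hleft hL hK).trans
    (mul_le_mul_of_nonneg_left (Real.sqrt_le_sqrt (hM ε hε)) hC)

theorem tendsto_incrementOperator {M : ℝ} (hab : a < b) (hη : Measurable η)
    (hB : ∀ x, |η x| ≤ B) (hleft : ∀ x < a, η x = 0)
    (hM : ∀ ε > 0, ∫ x in Icc a b, (η x - η (x - ε)) ^ 2 ≤ M * ε) {g : ℝ × ℝ → ℝ}
    (hg : MemLp g 2 (volume.restrict (Icc a b ×ˢ Icc a b))) :
    Tendsto (fun ε => incrementOperator η a b ε g) (𝓝[>] 0) (𝓝 0) := by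
  have hM0 : 0 ≤ M := by
    simpa using (setIntegral_nonneg measurableSet_Icc fun x _ => sq_nonneg _).trans (hM 1 one_pos)
  refine tendsto_zero_of_forall_approx fun θ hθ => ?_
  obtain ⟨g₀, hg₀c, hg₀, hgg₀⟩ := hg.exist_eLpNorm_sub_le (by simp) one_le_two
    (div_pos hθ (by linarith : 0 < M + 1))
  have hg₀' : MemLp g₀ 2 (volume.restrict (Icc a b ×ˢ Icc a b)) :=
    hg₀.continuous.memLp_of_hasCompactSupport hg₀c
  refine ⟨_, tendsto_incrementOperator_of_contDiff hab hη hB hleft hM (hg₀.of_le (by simp)) hg₀c,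
    ?_⟩
  filter_upwards [self_mem_nhdsWithin] with ε (hε : 0 < ε)
  rw [← incrementOperator_sub hη hB hg hg₀']
  calc _ ≤ M * (eLpNorm (g - g₀) 2 _).toReal :=
        abs_incrementOperator_le hε hη hB (hM ε hε) (hg.sub hg₀')
    _ ≤ M * (θ / (M + 1)) := by
      gcongr; exact ENNReal.toReal_le_of_le_ofReal (by positivity) hgg₀
    _ ≤ θ := by
      rw [mul_div_assoc', div_le_iff₀ (by linarith)]; nlinarith
end IncrementOperator

/-- Banach–Steinhaus argument in the proof of the representation of the horizontal
derivative: if `η` is continuous on `[-T,0]` (extended by `0` left of `-T` and by `η(0)`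
right of `0`) and has finite deterministic quadratic variation on `[-T,0]`, then the
operators `T_ε g = ∫∫ g(x,y)(η(x)−η(x−ε))(η(y)−η(y−ε))/ε dx dy` on `L²([-T,0]²)` are
uniformly bounded for `0 < ε < 1`, and `T_ε g → 0` as `ε → 0⁺` for every `g ∈ L²`. -/
theorem stmt13 (T : ℝ) (hT : 0 < T) (η : ℝ → ℝ)
    (hηc : ContinuousOn η (Set.Icc (-T) 0))
    (hext1 : ∀ x < -T, η x = 0)
    (hext2 : ∀ x ≥ (0:ℝ), η x = η 0)
    (qv : ℝ → ℝ)
    (hqv : ∀ x ∈ Set.Icc (-T) (0:ℝ),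
      Tendsto (fun ε : ℝ => (1 / ε) * ∫ s in (0:ℝ)..x, (η (s + ε) - η s) ^ 2)
        (𝓝[>] 0) (𝓝 (qv x))) :
    (∃ M, ∀ ε ∈ Set.Ioo (0:ℝ) 1, ∀ g : ℝ × ℝ → ℝ,
      MeasureTheory.MemLp g 2
        (MeasureTheory.volume.restrict (Set.Icc (-T) 0 ×ˢ Set.Icc (-T) (0:ℝ))) →
      |∫ p in Set.Icc (-T) 0 ×ˢ Set.Icc (-T) (0:ℝ),
          g p * (η p.1 - η (p.1 - ε)) * (η p.2 - η (p.2 - ε)) / ε| ≤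
        M * (MeasureTheory.eLpNorm g 2
          (MeasureTheory.volume.restrict (Set.Icc (-T) 0 ×ˢ Set.Icc (-T) (0:ℝ)))).toReal) ∧
    ∀ g : ℝ × ℝ → ℝ,
      MeasureTheory.MemLp g 2
        (MeasureTheory.volume.restrict (Set.Icc (-T) 0 ×ˢ Set.Icc (-T) (0:ℝ))) →
      Tendsto (fun ε : ℝ => ∫ p in Set.Icc (-T) 0 ×ˢ Set.Icc (-T) (0:ℝ),
          g p * (η p.1 - η (p.1 - ε)) * (η p.2 - η (p.2 - ε)) / ε)
        (𝓝[>] 0) (𝓝 0) := by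
  have hT' : -T ≤ 0 := by linarith
  obtain ⟨hηm, B, hB⟩ := measurable_and_bounded_of_continuousOn_Icc hT' hηc hext1 hext2
  have hqvT : Tendsto (fun ε => (1 / ε) * ∫ s in (-T)..0, (η (s + ε) - η s) ^ 2) (𝓝[>] 0)
      (𝓝 (-qv (-T))) := by
    simpa [intervalIntegral.integral_symm 0 (-T)] using (hqv (-T) ⟨le_rfl, hT'⟩).neg
  obtain ⟨M, hM⟩ := exists_integral_sq_sub_shift_le_mul hT' hηm hB hqvT
  exact ⟨⟨M, fun ε hε g hg => abs_incrementOperator_le hε.1 hηm hB (hM ε hε.1) hg⟩,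
    fun g hg => tendsto_incrementOperator (by linarith) hηm hB hext1 hM hg⟩
end

section
/- Let η : [-T,0] → ℝ be continuous (extended by η(x)=0 for x<−T, η(x)=η(0) for x≥0) and e ∈ C¹([-T,0]). Then |∫_{[-T,0]} e(x)(η(x) − η(x−ε)) dx| ≤ ε (∫_{[-T,0]} |e'(x)| dx + 2‖e‖_∞) ‖η‖_∞ for every ε > 0. -/
/-!
Moving the shift from `η` onto `e` (a change of variables, using `η = 0` left of `-T`) turns the
integral into `∫_{-T}^{-ε} (e x - e (x + ε)) η x dx + ∫_{-ε}^{0} e x η x dx`.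
The boundary piece is at most `ε ‖e‖_∞ ‖η‖_∞`. For the first piece,
`|e (x + ε) - e x| ≤ φ (x + ε) - φ x` with `φ` a primitive of `|e'|`, and the shifted
differences of a monotone `φ` integrate to at most `ε (φ 0 - φ (-T))`.
When `ε > T`, `η (x - ε)` vanishes on `[-T, 0]` and the integral is at most `T ‖e‖_∞ ‖η‖_∞`.
-/

open MeasureTheory Set intervalIntegral

section ShiftEstimates

variable {a b ε : ℝ}

theorem abs_sub_le_integral_abs_deriv {f f' : ℝ → ℝ}
    (hf : ∀ t ∈ Icc a b, HasDerivWithinAt f (f' t) (Icc a b) t)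
    (hf' : IntervalIntegrable f' volume a b) {x y : ℝ} (hax : a ≤ x) (hxy : x ≤ y) (hyb : y ≤ b) :
    |f y - f x| ≤ ∫ t in x..y, |f' t| := by
  have hsub : Icc x y ⊆ Icc a b := Icc_subset_Icc hax hyb
  have hFTC : ∫ t in x..y, f' t = f y - f x :=
    integral_eq_sub_of_hasDerivAt_of_le hxy
      (fun t ht => (hf t (hsub ht)).continuousWithinAt.mono hsub)
      (fun t ht => (hf t (hsub (Ioo_subset_Icc_self ht))).hasDerivAt
        (Icc_mem_nhds (hax.trans_lt ht.1) (ht.2.trans_le hyb)))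
      (hf'.mono_set (by rwa [uIcc_of_le hxy, uIcc_of_le (hax.trans (hxy.trans hyb))]))
  rw [← hFTC]
  exact abs_integral_le_integral_abs hxy

theorem MonotoneOn.intervalIntegrable_of_Icc_subset {φ : ℝ → ℝ} (hφ : MonotoneOn φ (Icc a b))
    {s t : ℝ} (has : a ≤ s) (hst : s ≤ t) (htb : t ≤ b) : IntervalIntegrable φ volume s t :=
  (hφ.mono (by rw [uIcc_of_le hst]; exact Icc_subset_Icc has htb)).intervalIntegrable

theorem MonotoneOn.intervalIntegrable_comp_add_sub {φ : ℝ → ℝ} (hφ : MonotoneOn φ (Icc a b))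
    (hε : 0 ≤ ε) (hεab : ε ≤ b - a) :
    IntervalIntegrable (fun x => φ (x + ε) - φ x) volume a (b - ε) := by
  have hshift : IntervalIntegrable (fun x => φ (x + ε)) volume (a + ε - ε) (b - ε) :=
    (hφ.intervalIntegrable_of_Icc_subset (by linarith) (by linarith) le_rfl).comp_add_right ε
  rw [add_sub_cancel_right] at hshift
  exact hshift.sub (hφ.intervalIntegrable_of_Icc_subset le_rfl (by linarith) (by linarith))

theorem MonotoneOn.integral_comp_add_sub_le {φ : ℝ → ℝ} (hφ : MonotoneOn φ (Icc a b))
    (hε : 0 ≤ ε) (hεab : ε ≤ b - a) :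
    ∫ x in a..b - ε, (φ (x + ε) - φ x) ≤ ε * (φ b - φ a) := by
  have hint (s t : ℝ) (has : a ≤ s) (hst : s ≤ t) (htb : t ≤ b) :=
    hφ.intervalIntegrable_of_Icc_subset has hst htb
  have hright : ∫ x in b - ε..b, φ x ≤ ε * φ b := by
    have := integral_mono_on (by linarith) (hint (b - ε) b (by linarith) (by linarith) le_rfl)
      intervalIntegrable_const fun x hx =>
        hφ ⟨by linarith [hx.1], hx.2⟩ ⟨by linarith, le_rfl⟩ hx.2
    simpa using this
  have hleft : ε * φ a ≤ ∫ x in a..a + ε, φ x := by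
    have := integral_mono_on (by linarith) intervalIntegrable_const
      (hint a (a + ε) le_rfl (by linarith) (by linarith)) fun x hx =>
        hφ ⟨le_rfl, by linarith⟩ ⟨hx.1, by linarith [hx.2]⟩ hx.1
    simpa using this
  have hshift : IntervalIntegrable (fun x => φ (x + ε)) volume a (b - ε) := by
    simpa using (hφ.intervalIntegrable_comp_add_sub hε hεab).add
      (hint a (b - ε) le_rfl (by linarith) (by linarith))
  rw [integral_sub hshift (hint a (b - ε) le_rfl (by linarith) (by linarith)),
    integral_comp_add_right, sub_add_cancel, integral_interval_sub_interval_comm'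
      (hint (a + ε) b (by linarith) (by linarith) le_rfl)
      (hint a (b - ε) le_rfl (by linarith) (by linarith))
      (hint a (a + ε) le_rfl (by linarith) (by linarith)).symm]
  linarith

theorem ContinuousOn.comp_add_const_Icc {f : ℝ → ℝ} (hf : ContinuousOn f (Icc a b))
    (hε : 0 ≤ ε) : ContinuousOn (fun x => f (x + ε)) (Icc a (b - ε)) :=
  hf.comp (continuous_add_const ε).continuousOn fun x hx =>
    ⟨by linarith [hx.1], by linarith [hx.2]⟩

theorem ContinuousOn.comp_add_sub {f : ℝ → ℝ} (hf : ContinuousOn f (Icc a b)) (hε : 0 ≤ ε) :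
    ContinuousOn (fun x => f (x + ε) - f x) (Icc a (b - ε)) :=
  (hf.comp_add_const_Icc hε).sub (hf.mono (Icc_subset_Icc le_rfl (by linarith)))

theorem integral_abs_comp_add_sub_le {f f' : ℝ → ℝ}
    (hf : ∀ t ∈ Icc a b, HasDerivWithinAt f (f' t) (Icc a b) t)
    (hf' : IntervalIntegrable f' volume a b) (hε : 0 ≤ ε) (hεab : ε ≤ b - a) :
    ∫ x in a..b - ε, |f (x + ε) - f x| ≤ ε * ∫ t in a..b, |f' t| := by
  set φ : ℝ → ℝ := fun s => ∫ t in a..s, |f' t|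
  have hint (s t : ℝ) (has : a ≤ s) (hst : s ≤ t) (htb : t ≤ b) :
      IntervalIntegrable (fun u => |f' u|) volume s t :=
    hf'.abs.mono_set <| by
      rw [uIcc_of_le hst, uIcc_of_le (has.trans (hst.trans htb))]
      exact Icc_subset_Icc has htb
  have hφ_sub (s t : ℝ) (has : a ≤ s) (hst : s ≤ t) (htb : t ≤ b) :
      φ t - φ s = ∫ u in s..t, |f' u| :=
    integral_interval_sub_left (hint a t le_rfl (has.trans hst) htb)
      (hint a s le_rfl has (hst.trans htb))
  have hφ : MonotoneOn φ (Icc a b) := fun s hs t ht hst =>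
    sub_nonneg.1 <| (hφ_sub s t hs.1 hst ht.2).symm ▸
      integral_nonneg hst fun _ _ => abs_nonneg _
  have hfc : ContinuousOn f (Icc a b) := fun x hx => (hf x hx).continuousWithinAt
  calc ∫ x in a..b - ε, |f (x + ε) - f x|
      ≤ ∫ x in a..b - ε, (φ (x + ε) - φ x) := by
        refine integral_mono_on (by linarith) ?_ (hφ.intervalIntegrable_comp_add_sub hε hεab)
          fun x hx => ?_
        · exact (hfc.comp_add_sub hε).abs.intervalIntegrable_of_Icc (by linarith)
        · rw [hφ_sub x (x + ε) hx.1 (by linarith) (by linarith [hx.2])]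
          exact abs_sub_le_integral_abs_deriv hf hf' hx.1 (by linarith) (by linarith [hx.2])
    _ ≤ ε * (φ b - φ a) := hφ.integral_comp_add_sub_le hε hεab
    _ = ε * ∫ t in a..b, |f' t| := by simp [φ]

theorem integral_mul_sub_comp_sub_eq {f η : ℝ → ℝ} (hf : ContinuousOn f (Icc a b))
    (hη : ContinuousOn η (Icc a b)) (hη0 : ∀ x < a, η x = 0) (hε : 0 ≤ ε) (hεab : ε ≤ b - a) :
    ∫ x in a..b, f x * (η x - η (x - ε)) =
      (∫ x in a..b - ε, (f x - f (x + ε)) * η x) + ∫ x in b - ε..b, f x * η x := by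
  set g : ℝ → ℝ := fun y => f (y + ε) * η y
  have hg_zero : EqOn g 0 (Ioo (a - ε) a) := fun y hy => by simp [g, hη0 y hy.2]
  have hg_left : IntervalIntegrable g volume (a - ε) a := by
    rw [intervalIntegrable_iff_integrableOn_Ioc_of_le (by linarith),
      integrableOn_Ioc_iff_integrableOn_Ioo]
    exact integrableOn_zero.congr_fun hg_zero.symm measurableSet_Ioo
  have hg_left_eq : ∫ y in a - ε..a, g y = 0 := by
    rw [integral_of_le (by linarith), integral_Ioc_eq_integral_Ioo,
      setIntegral_congr_fun measurableSet_Ioo hg_zero]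
    simp
  have hg_right : IntervalIntegrable g volume a (b - ε) := by
    exact ((hf.comp_add_const_Icc hε).mul (hη.mono (Icc_subset_Icc le_rfl (by linarith))))
      |>.intervalIntegrable_of_Icc (by linarith)
  have hfη (s t : ℝ) (has : a ≤ s) (hst : s ≤ t) (htb : t ≤ b) :
      IntervalIntegrable (fun x => f x * η x) volume s t :=
    ((hf.mul hη).mono (Icc_subset_Icc has htb)).intervalIntegrable_of_Icc hst
  have hshift_int : IntervalIntegrable (fun x => f x * η (x - ε)) volume a b := by
    simpa [g] using (hg_left.trans hg_right).comp_sub_right ε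
  have hshift : ∫ x in a..b, f x * η (x - ε) = ∫ y in a..b - ε, g y := by
    simp_rw [show ∀ x, f x * η (x - ε) = g (x - ε) by simp [g]]
    rw [integral_comp_sub_right, ← integral_add_adjacent_intervals hg_left hg_right, hg_left_eq,
      zero_add]
  have hdiff : ∫ x in a..b - ε, (f x - f (x + ε)) * η x =
      (∫ x in a..b - ε, f x * η x) - ∫ y in a..b - ε, g y := by
    simp_rw [sub_mul]
    exact integral_sub (hfη a (b - ε) le_rfl (by linarith) (by linarith)) hg_right
  have hsub : ∫ x in a..b, f x * (η x - η (x - ε)) =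
      (∫ x in a..b, f x * η x) - ∫ x in a..b, f x * η (x - ε) := by
    simp_rw [mul_sub]
    exact integral_sub (hfη a b le_rfl (by linarith) le_rfl) hshift_int
  have hsplit := integral_add_adjacent_intervals (hfη a (b - ε) le_rfl (by linarith) (by linarith))
    (hfη (b - ε) b (by linarith) (by linarith) le_rfl)
  linarith

theorem abs_integral_mul_sub_comp_sub_le {f f' η : ℝ → ℝ} {K M : ℝ}
    (hf : ∀ t ∈ Icc a b, HasDerivWithinAt f (f' t) (Icc a b) t)
    (hf' : IntervalIntegrable f' volume a b) (hη : ContinuousOn η (Icc a b))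
    (hη0 : ∀ x < a, η x = 0) (hK : ∀ x ∈ Icc a b, |f x| ≤ K) (hM : ∀ x ∈ Icc a b, |η x| ≤ M)
    (hε : 0 ≤ ε) (hεab : ε ≤ b - a) :
    |∫ x in a..b, f x * (η x - η (x - ε))| ≤ ε * ((∫ t in a..b, |f' t|) + K) * M := by
  have hfc : ContinuousOn f (Icc a b) := fun x hx => (hf x hx).continuousWithinAt
  have hM0 : 0 ≤ M := (abs_nonneg _).trans (hM a ⟨le_rfl, by linarith⟩)
  have hinterior : |∫ x in a..b - ε, (f x - f (x + ε)) * η x| ≤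
      ε * (∫ t in a..b, |f' t|) * M := calc
    _ ≤ ∫ x in a..b - ε, |f (x + ε) - f x| * M := by
        rw [← Real.norm_eq_abs]
        refine norm_integral_le_of_norm_le (by linarith : a ≤ b - ε)
          (ae_of_all _ fun x hx => ?_) ?_
        · rw [Real.norm_eq_abs, abs_mul, abs_sub_comm]
          exact mul_le_mul_of_nonneg_left (hM x ⟨hx.1.le, by linarith [hx.2]⟩) (abs_nonneg _)
        · exact ((hfc.comp_add_sub hε).abs.mul continuousOn_const).intervalIntegrable_of_Icc
            (by linarith)
    _ = (∫ x in a..b - ε, |f (x + ε) - f x|) * M := integral_mul_const M _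
    _ ≤ ε * (∫ t in a..b, |f' t|) * M :=
        mul_le_mul_of_nonneg_right (integral_abs_comp_add_sub_le hf hf' hε hεab) hM0
  have hboundary : |∫ x in b - ε..b, f x * η x| ≤ K * M * ε := by
    have := norm_integral_le_of_norm_le_const (C := K * M) (a := b - ε) (b := b)
      (f := fun x => f x * η x) fun x hx => by
        rw [uIoc_of_le (by linarith)] at hx
        have hx' : x ∈ Icc a b := ⟨by linarith [hx.1], hx.2⟩
        rw [Real.norm_eq_abs, abs_mul]
        exact mul_le_mul (hK x hx') (hM x hx') (abs_nonneg _) ((abs_nonneg _).trans (hK x hx'))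
    simpa [abs_of_nonneg hε] using this
  rw [integral_mul_sub_comp_sub_eq hfc hη hη0 hε hεab]
  calc _ ≤ _ := abs_add_le _ _
    _ ≤ _ := add_le_add hinterior hboundary
    _ = _ := by ring

theorem abs_setIntegral_mul_sub_comp_sub_le {f f' η : ℝ → ℝ} {K M : ℝ}
    (hf : ∀ t ∈ Icc a b, HasDerivWithinAt f (f' t) (Icc a b) t)
    (hf' : IntegrableOn f' (Icc a b)) (hη : ContinuousOn η (Icc a b))
    (hη0 : ∀ x < a, η x = 0) (hK : ∀ x ∈ Icc a b, |f x| ≤ K) (hM : ∀ x ∈ Icc a b, |η x| ≤ M)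
    (hK0 : 0 ≤ K) (hM0 : 0 ≤ M) (hε : 0 ≤ ε) :
    |∫ x in Icc a b, f x * (η x - η (x - ε))| ≤
      ε * ((∫ x in Icc a b, |f' x|) + 2 * K) * M := by
  have hI : 0 ≤ ∫ x in Icc a b, |f' x| := integral_nonneg fun _ => abs_nonneg _
  rcases le_or_gt ε (b - a) with hεab | hεab
  · have hab : a ≤ b := by linarith
    have hIcc (g : ℝ → ℝ) : ∫ x in Icc a b, g x = ∫ x in a..b, g x := by
      rw [integral_Icc_eq_integral_Ioc, integral_of_le hab]
    rw [hIcc, hIcc]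
    calc _ ≤ ε * ((∫ t in a..b, |f' t|) + K) * M := abs_integral_mul_sub_comp_sub_le hf
          ((intervalIntegrable_iff_integrableOn_Icc_of_le hab).2 hf') hη hη0 hK hM hε hεab
      _ ≤ _ := by gcongr; linarith
  · have hshift_zero : EqOn (fun x => f x * (η x - η (x - ε))) (fun x => f x * η x) (Icc a b) :=
      fun x hx => by simp [hη0 (x - ε) (by linarith [hx.2])]
    have hbound := norm_setIntegral_le_of_norm_le_const (C := K * M)
      (measure_Icc_lt_top (μ := volume)) fun x hx => by
        rw [Real.norm_eq_abs, abs_mul]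
        exact mul_le_mul (hK x hx) (hM x hx) (abs_nonneg _) hK0
    rw [setIntegral_congr_fun measurableSet_Icc hshift_zero, ← Real.norm_eq_abs]
    rw [Real.volume_real_Icc] at hbound
    calc _ ≤ K * M * max (b - a) 0 := hbound
      _ ≤ K * M * ε := by gcongr; exact max_le hεab.le hε
      _ ≤ ε * ((∫ x in Icc a b, |f' x|) + 2 * K) * M := by
        nlinarith [mul_nonneg (mul_nonneg hε hM0) (add_nonneg hI hK0)]

end ShiftEstimates

theorem stmt14_general (T : ℝ) (η e e' : ℝ → ℝ)
    (hηc : ContinuousOn η (Set.Icc (-T) 0))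
    (hext1 : ∀ x < -T, η x = 0)
    (he : ∀ x ∈ Set.Icc (-T) (0:ℝ), HasDerivWithinAt e (e' x) (Set.Icc (-T) 0) x)
    (he' : ContinuousOn e' (Set.Icc (-T) 0))
    (ε : ℝ) (hε : 0 < ε) :
    |∫ x in Set.Icc (-T) (0:ℝ), e x * (η x - η (x - ε))| ≤
      ε * ((∫ x in Set.Icc (-T) (0:ℝ), |e' x|) +
          2 * sSup ((fun x => |e x|) '' Set.Icc (-T) 0)) *
        sSup ((fun x => |η x|) '' Set.Icc (-T) 0) := by
  have hec : ContinuousOn e (Icc (-T) 0) := fun x hx => (he x hx).continuousWithinAt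
  have sSup_abs_nonneg (g : ℝ → ℝ) : 0 ≤ sSup ((fun x => |g x|) '' Icc (-T) 0) :=
    Real.sSup_nonneg (by rintro _ ⟨x, -, rfl⟩; exact abs_nonneg _)
  exact abs_setIntegral_mul_sub_comp_sub_le he he'.integrableOn_Icc hηc hext1
    (fun x hx => hec.abs.le_sSup_image_Icc hx) (fun x hx => hηc.abs.le_sSup_image_Icc hx)
    (sSup_abs_nonneg e) (sSup_abs_nonneg η) hε.le

/-- Estimate used in the proof of `T_ε g → 0`: for `η` continuous on `[-T,0]` (extended by
`0` left of `-T` and `η(0)` right of `0`) and `e ∈ C¹([-T,0])`,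
`|∫_{[-T,0]} e(x)(η(x) − η(x−ε)) dx| ≤ ε (∫_{[-T,0]} |e'| + 2‖e‖_∞)‖η‖_∞`. -/
theorem stmt14 (T : ℝ) (hT : 0 < T) (η e e' : ℝ → ℝ)
    (hηc : ContinuousOn η (Set.Icc (-T) 0))
    (hext1 : ∀ x < -T, η x = 0)
    (hext2 : ∀ x ≥ (0:ℝ), η x = η 0)
    (he : ∀ x ∈ Set.Icc (-T) (0:ℝ), HasDerivWithinAt e (e' x) (Set.Icc (-T) 0) x)
    (he' : ContinuousOn e' (Set.Icc (-T) 0))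
    (ε : ℝ) (hε : 0 < ε) :
    |∫ x in Set.Icc (-T) (0:ℝ), e x * (η x - η (x - ε))| ≤
      ε * ((∫ x in Set.Icc (-T) (0:ℝ), |e' x|) +
          2 * sSup ((fun x => |e x|) '' Set.Icc (-T) 0)) *
        sSup ((fun x => |η x|) '' Set.Icc (-T) 0) :=
  stmt14_general T η e e' hηc hext1 he he' ε hε
end

section
/- Let Ψ ∈ C^{1,2}([0,T] × ℝ^N), φ₁,…,φ_N ∈ C²([0,T]), and define u : [0,T] × 𝒞([-T,0]) → ℝ by u(t,η) = Ψ(t, x₁(t,η),…,x_N(t,η)) with x_i(t,η) = η(0)φ_i(t) − ∫_{−t}^0 η(x)φ_i'(x+t)dx. Then the horizontal derivative of u exists at every (t,η) ∈ [0,T[ × C([-T,0]) and equals D^H u(t,η) = −∑_{i=1}^N D_{x_i}Ψ(t, x₁(t,η),…,x_N(t,η)) · (η(0)φ_i'(t) − η(−t)φ_i'(0) − ∫_{−t}^0 η(x)φ_i''(x+t)dx). -/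
open MeasureTheory Filter Topology Set

/-!
For small `ε > 0` the shifted path never leaves `[-T, 0]` on the range of integration, so `η` may
be replaced by a continuous and `φ_i'` by a `C¹` extension to `ℝ`. Then
`g(y) - g(y - ε) = ε ∫₀¹ g'(y - ε + θε) dθ` splits `∫ₐᵇ η(y - ε) g(y) dy` into `∫_{a-ε}^{b-ε} η g`,
whose `ε`-derivative gives the boundary terms, plus `ε` times a parametric integral continuous in
`ε`, which gives `∫ₐᵇ η g'`. So each `x_i` is right-differentiable in `ε`. Continuous partial
derivatives make `Ψ(t, ·)` strictly differentiable (induction on `N` from the bivariate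
criterion), and the chain rule concludes.
-/

theorem hasStrictFDerivAt_of_hasDerivAt_update {E : Type*} [NormedAddCommGroup E]
    [NormedSpace ℝ E] {n : ℕ} {F : (Fin n → ℝ) → E} {D : (Fin n → ℝ) → Fin n → E}
    (hD : ∀ x i, HasDerivAt (fun s => F (Function.update x i s)) (D x i) (x i))
    (hDc : ∀ i, Continuous fun x => D x i) (x : Fin n → ℝ) :
    HasStrictFDerivAt F (∑ i, (ContinuousLinearMap.proj (R := ℝ) i).smulRight (D x i)) x := by
  induction n with
  | zero =>
    have hF : F = fun _ => F x := funext fun y => congrArg F (Subsingleton.elim y x)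
    rw [hF, Finset.univ_eq_empty, Finset.sum_empty]
    exact hasStrictFDerivAt_const _ _
  | succ n ih =>
    set G : ℝ → (Fin n → ℝ) → E := fun a y => F (Fin.cons a y)
    have hcons : Continuous fun p : ℝ × (Fin n → ℝ) => (Fin.cons p.1 p.2 : Fin (n + 1) → ℝ) :=
      (Fin.consEquivL ℝ fun _ => ℝ).continuous
    have hG : HasStrictFDerivAt ↿G
        ((ContinuousLinearMap.toSpanSingleton ℝ (D x 0)).coprod
          (∑ i, (ContinuousLinearMap.proj (R := ℝ) i).smulRight (D x i.succ)))
        (x 0, Fin.tail x) := by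
      have := hasStrictFDerivAt_uncurry_coprod (𝕜 := ℝ) (u := (x 0, Fin.tail x)) (f := G)
        (f₁ := fun a y => ContinuousLinearMap.toSpanSingleton ℝ (D (Fin.cons a y) 0))
        (f₂ := fun a y =>
          ∑ i, (ContinuousLinearMap.proj (R := ℝ) i).smulRight (D (Fin.cons a y) i.succ))
        (Eventually.of_forall fun v => ?_) (Eventually.of_forall fun v => ?_) ?_ ?_
      · simpa [Function.HasUncurry.uncurry, Fin.cons_self_tail] using this
      · simpa [G, Function.HasUncurry.uncurry, Fin.update_cons_zero]
          using (hD (Fin.cons v.1 v.2) 0).hasFDerivAt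
      · refine (ih (F := fun y => G v.1 y) (D := fun y i => D (Fin.cons v.1 y) i.succ)
          (fun y i => ?_) (fun i => (hDc i.succ).comp ?_) v.2).hasFDerivAt
        · simpa [G, Fin.cons_update] using hD (Fin.cons v.1 y) i.succ
        · fun_prop
      · exact ((ContinuousLinearMap.toSpanSingletonLIE ℝ E).continuous.comp
          ((hDc 0).comp hcons)).continuousAt
      · exact (continuous_finsetSum Finset.univ fun i _ =>
          (ContinuousLinearMap.smulRightL ℝ _ E
            (ContinuousLinearMap.proj (R := ℝ) (φ := fun _ : Fin n => ℝ) i)).continuous.comp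
              ((hDc i.succ).comp hcons)).continuousAt
    have hF : F = ↿G ∘ (Fin.consEquivL ℝ fun _ => ℝ).symm := by
      funext y; simp [G, Function.HasUncurry.uncurry]
    rw [hF]
    refine (hG.comp x (Fin.consEquivL ℝ fun _ => ℝ).symm.hasStrictFDerivAt).congr_fderiv ?_
    ext v
    simp [Fin.sum_univ_succ, Fin.tail]

theorem hasDerivAt_id_mul_of_continuousAt {M : ℝ → ℝ} (hM : ContinuousAt M 0) :
    HasDerivAt (fun ε => ε * M ε) (M 0) 0 := by
  rw [hasDerivAt_iff_tendsto_slope_zero]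
  refine (hM.tendsto.mono_left nhdsWithin_le_nhds).congr' ?_
  filter_upwards [self_mem_nhdsWithin] with ε hε
  simp [inv_mul_cancel_left₀ hε]

theorem hasDerivAt_intervalIntegral_sub_sub {k : ℝ → ℝ} (hk : Continuous k) (a b : ℝ) :
    HasDerivAt (fun ε => ∫ z in (a - ε)..(b - ε), k z) (k a - k b) 0 := by
  have hP : ∀ c : ℝ, HasDerivAt (fun ε => ∫ z in (0 : ℝ)..(c - ε), k z) (-k c) 0 := fun c =>
    (hk.integral_hasStrictDerivAt 0 (c - 0)).hasDerivAt.comp_const_sub c 0 |>.congr_deriv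
      (by rw [sub_zero])
  refine ((hP b).sub (hP a)).congr_deriv (by ring) |>.congr_of_eventuallyEq
    (Eventually.of_forall fun ε => ?_)
  exact (intervalIntegral.integral_interval_sub_left (hk.intervalIntegrable _ _)
    (hk.intervalIntegrable _ _)).symm

theorem sub_eq_mul_integral_deriv {g g' : ℝ → ℝ} (hg : ∀ y, HasDerivAt g (g' y) y)
    (hg' : Continuous g') (y ε : ℝ) :
    g y - g (y - ε) = ε * ∫ θ in (0 : ℝ)..1, g' (y - ε + θ * ε) := by
  simpa using (intervalIntegral.integral_unitInterval_deriv_eq_sub (f := g) (f' := g')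
    (z₀ := y - ε) (z₁ := ε) (by fun_prop) (fun θ _ => hg _)).symm

theorem hasDerivAt_integral_comp_sub_mul {η g g' : ℝ → ℝ} (hη : Continuous η)
    (hg : ∀ y, HasDerivAt g (g' y) y) (hg' : Continuous g') (a b : ℝ) :
    HasDerivAt (fun ε => ∫ y in a..b, η (y - ε) * g y)
      (η a * g a - η b * g b + ∫ y in a..b, η y * g' y) 0 := by
  set K : ℝ → ℝ → ℝ := fun ε y => η (y - ε) * ∫ θ in (0 : ℝ)..1, g' (y - ε + θ * ε)
  set M : ℝ → ℝ := fun ε => ∫ y in a..b, K ε y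
  have hgc : Continuous g := continuous_iff_continuousAt.2 fun y => (hg y).continuousAt
  have hK : Continuous ↿K := by
    change Continuous fun p : ℝ × ℝ =>
      η (p.2 - p.1) * ∫ θ in (0 : ℝ)..1, g' (p.2 - p.1 + θ * p.1)
    refine (hη.comp (by fun_prop)).mul
      (intervalIntegral.continuous_parametric_intervalIntegral_of_continuous' ?_ 0 1)
    change Continuous fun q : (ℝ × ℝ) × ℝ => g' (q.1.2 - q.1.1 + q.2 * q.1.1)
    fun_prop
  have hM : Continuous M :=
    intervalIntegral.continuous_parametric_intervalIntegral_of_continuous' hK a b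
  have hM0 : M 0 = ∫ y in a..b, η y * g' y := by simp [M, K]
  have split : ∀ ε, ∫ y in a..b, η (y - ε) * g y
      = (∫ z in (a - ε)..(b - ε), η z * g z) + ε * M ε := by
    intro ε
    calc ∫ y in a..b, η (y - ε) * g y
        = ∫ y in a..b, (η (y - ε) * g (y - ε) + ε * K ε y) := by
          congr 1; funext y
          rw [sub_eq_iff_eq_add'.1 (sub_eq_mul_integral_deriv hg hg' y ε)]; ring
      _ = (∫ z in (a - ε)..(b - ε), η z * g z) + ε * M ε := by
          rw [intervalIntegral.integral_add (Continuous.intervalIntegrable (by fun_prop) _ _)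
            ((hK.uncurry_left ε).const_mul ε |>.intervalIntegrable _ _),
            intervalIntegral.integral_const_mul,
            intervalIntegral.integral_comp_sub_right (fun z => η z * g z)]
  rw [funext split, ← hM0]
  exact (hasDerivAt_intervalIntegral_sub_sub (hη.mul hgc) a b).add
    (hasDerivAt_id_mul_of_continuousAt hM.continuousAt)

theorem exists_hasDerivAt_eqOn_Icc {a b : ℝ} (hab : a ≤ b) {g g' : ℝ → ℝ}
    (hg : ∀ x ∈ Icc a b, HasDerivWithinAt g (g' x) (Icc a b) x)
    (hg' : ContinuousOn g' (Icc a b)) :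
    ∃ G G' : ℝ → ℝ, (∀ x, HasDerivAt G (G' x) x) ∧ Continuous G' ∧
      EqOn G g (Icc a b) ∧ EqOn G' g' (Icc a b) := by
  set G' : ℝ → ℝ := fun x => g' (projIcc a b hab x)
  have hG'c : Continuous G' :=
    hg'.comp_continuous continuous_projIcc.subtype_val fun x => (projIcc a b hab x).2
  have hG'eq : EqOn G' g' (Icc a b) := fun x hx => by simp [G', projIcc_of_mem hab hx]
  refine ⟨fun x => g a + ∫ u in a..x, G' u, G',
    fun x => (hG'c.integral_hasStrictDerivAt a x).hasDerivAt.const_add _, hG'c, fun x hx => ?_,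
    hG'eq⟩
  have hsub : Icc a x ⊆ Icc a b := Icc_subset_Icc_right hx.2
  have hFTC : ∫ u in a..x, g' u = g x - g a :=
    intervalIntegral.integral_eq_sub_of_hasDeriv_right_of_le hx.1
      (fun y hy => (hg y (hsub hy)).continuousWithinAt.mono hsub)
      (fun y hy => ((hg y (hsub (Ioo_subset_Icc_self hy))).hasDerivAt
        (Icc_mem_nhds hy.1 (hy.2.trans_le hx.2))).hasDerivWithinAt)
      ((hg'.mono (uIcc_of_le hx.1 ▸ hsub)).intervalIntegrable)
  show g a + ∫ u in a..x, G' u = g x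
  rw [intervalIntegral.integral_congr (hG'eq.mono (uIcc_of_le hx.1 ▸ hsub)), hFTC]
  ring

theorem hasDerivWithinAt_integral_zeroExtend_shift {T t : ℝ} (ht : t ∈ Ico 0 T) {η : ℝ → ℝ}
    (hη : ContinuousOn η (Icc (-T) 0)) {g g' : ℝ → ℝ}
    (hg : ∀ x ∈ Icc 0 T, HasDerivWithinAt g (g' x) (Icc 0 T) x)
    (hg' : ContinuousOn g' (Icc 0 T)) :
    HasDerivWithinAt
      (fun ε => ∫ y in (-t)..0, (if y - ε < -T then 0 else η (y - ε)) * g (y + t))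
      (η (-t) * g 0 - η 0 * g t + ∫ y in (-t)..0, η y * g' (y + t)) (Ici 0) 0 := by
  have hT : -T ≤ 0 := by linarith [ht.1, ht.2]
  set ηe : ℝ → ℝ := fun x => η (projIcc (-T) 0 hT x)
  have hηe : Continuous ηe :=
    hη.comp_continuous continuous_projIcc.subtype_val fun x => (projIcc _ _ hT x).2
  have hηeq : EqOn ηe η (Icc (-T) 0) := fun x hx => by simp [ηe, projIcc_of_mem hT hx]
  obtain ⟨G, G', hG, hG'c, hGeq, hG'eq⟩ := exists_hasDerivAt_eqOn_Icc (by linarith) hg hg'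
  have hmem : ∀ y ∈ uIcc (-t) 0, y + t ∈ Icc 0 T := fun y hy => by
    rw [uIcc_of_le (by linarith [ht.1])] at hy
    constructor <;> linarith [hy.1, hy.2, ht.2]
  have key := hasDerivAt_integral_comp_sub_mul hηe (g := fun y => G (y + t))
    (g' := fun y => G' (y + t)) (fun y => (hG (y + t)).comp_add_const y t) (by fun_prop) (-t) 0
  have hderiv : ηe (-t) * G (-t + t) - ηe 0 * G (0 + t) + ∫ y in (-t)..0, ηe y * G' (y + t)
      = η (-t) * g 0 - η 0 * g t + ∫ y in (-t)..0, η y * g' (y + t) := by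
    have h0 := hmem 0 right_mem_uIcc
    have ht' := hmem (-t) left_mem_uIcc
    rw [zero_add] at h0
    rw [neg_add_cancel] at ht'
    rw [neg_add_cancel, zero_add, hηeq ⟨by linarith [ht.2], by linarith [ht.1]⟩,
      hηeq ⟨hT, le_rfl⟩, hGeq h0, hGeq ht', intervalIntegral.integral_congr fun y hy => ?_]
    have hy' : y ∈ Icc (-T) 0 := by
      rw [uIcc_of_le (by linarith [ht.1])] at hy
      exact ⟨by linarith [hy.1, ht.2], hy.2⟩
    simp only [hηeq hy', hG'eq (hmem y hy)]
  refine (key.hasDerivWithinAt.congr_deriv hderiv).congr_of_eventuallyEq_of_mem ?_ self_mem_Ici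
  filter_upwards [Ico_mem_nhdsGE (by linarith [ht.2] : (0 : ℝ) < T - t)] with ε hε
  refine intervalIntegral.integral_congr fun y hy => ?_
  have hyε : y - ε ∈ Icc (-T) 0 := by
    rw [uIcc_of_le (by linarith [ht.1])] at hy
    constructor <;> linarith [hy.1, hy.2, hε.1, hε.2]
  simp only [if_neg (not_lt.2 hyε.1), hηeq hyε, hGeq (hmem y hy)]

theorem stmt18_general (T : ℝ) (N : ℕ)
    (Ψ : ℝ → (Fin N → ℝ) → ℝ) (DΨ : ℝ → (Fin N → ℝ) → Fin N → ℝ)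
    (hDΨ : ∀ τ x i, HasDerivAt (fun s => Ψ τ (Function.update x i s)) (DΨ τ x i) (x i))
    (hDΨc : ∀ i, Continuous fun p : ℝ × (Fin N → ℝ) => DΨ p.1 p.2 i)
    (φ φ' φ'' : Fin N → ℝ → ℝ)
    (hφ' : ∀ i, ∀ x ∈ Set.Icc (0:ℝ) T, HasDerivWithinAt (φ' i) (φ'' i x) (Set.Icc 0 T) x)
    (hφ'' : ∀ i, ContinuousOn (φ'' i) (Set.Icc 0 T)) :
    ∀ t ∈ Set.Ico (0:ℝ) T, ∀ η : ℝ → ℝ, ContinuousOn η (Set.Icc (-T) 0) →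
      Tendsto (fun ε : ℝ =>
          (Ψ t (fun i => η 0 * φ i t - ∫ x in (-t)..0, η x * φ' i (x + t)) -
            Ψ t (fun i => η 0 * φ i t -
              ∫ x in (-t)..0, (if x - ε < -T then 0 else η (x - ε)) * φ' i (x + t))) / ε)
        (𝓝[>] 0)
        (𝓝 (-∑ i : Fin N,
          DΨ t (fun j => η 0 * φ j t - ∫ x in (-t)..0, η x * φ' j (x + t)) i *
            (η 0 * φ' i t - η (-t) * φ' i 0 -
              ∫ x in (-t)..0, η x * φ'' i (x + t)))) := by
  intro t ht η hη
  set x : Fin N → ℝ := fun i => η 0 * φ i t - ∫ y in (-t)..0, η y * φ' i (y + t)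
  set c : ℝ → Fin N → ℝ := fun ε i => η 0 * φ i t -
    ∫ y in (-t)..0, (if y - ε < -T then 0 else η (y - ε)) * φ' i (y + t)
  have hc0 : c 0 = x := funext fun i => by
    simp only [c, x, sub_zero]
    congr 1
    refine intervalIntegral.integral_congr fun y hy => ?_
    rw [uIcc_of_le (by linarith [ht.1])] at hy
    simp only [if_neg (not_lt.2 (by linarith [hy.1, ht.2] : -T ≤ y))]
  have hc : HasDerivWithinAt c (fun i => η 0 * φ' i t - η (-t) * φ' i 0 -
      ∫ y in (-t)..0, η y * φ'' i (y + t)) (Ici 0) 0 :=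
    hasDerivWithinAt_pi.2 fun i =>
      ((hasDerivWithinAt_integral_zeroExtend_shift ht hη (hφ' i) (hφ'' i)).const_sub
        (η 0 * φ i t)).congr_deriv (by ring)
  have hΨ := hasStrictFDerivAt_of_hasDerivAt_update (hDΨ t)
    (fun i => (hDΨc i).comp (Continuous.prodMk_right t)) x
  have hcomp := hΨ.hasFDerivAt.comp_hasDerivWithinAt_of_eq (0 : ℝ) (hc.mono Ioi_subset_Ici_self)
    hc0.symm
  rw [hasDerivWithinAt_iff_tendsto_slope' (by simp)] at hcomp
  simp only [FunLike.coe_sum, Finset.sum_apply, ContinuousLinearMap.smulRight_apply,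
    ContinuousLinearMap.proj_apply, smul_eq_mul] at hcomp
  simp_rw [mul_comm (DΨ t x _)]
  refine hcomp.neg.congr fun ε => ?_
  rw [slope_def_field, Function.comp_apply, Function.comp_apply, hc0, sub_zero, ← neg_div,
    neg_sub]

/-- Horizontal derivative of a cylindrical functional
`u(t,η) = Ψ(t, x₁(t,η),…,x_N(t,η))` with `x_i(t,η) = η(0)φ_i(t) − ∫_{−t}^0 η(x)φ_i'(x+t)dx`,
for `Ψ ∈ C^{1,2}([0,T] × ℝ^N)` and `φ_i ∈ C²([0,T])`: for every `(t,η) ∈ [0,T[ × C([-T,0])`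
the limit defining `D^H u(t,η)` exists and equals
`−∑_i D_{x_i}Ψ(t,x(t,η))·(η(0)φ_i'(t) − η(−t)φ_i'(0) − ∫_{−t}^0 η(x)φ_i''(x+t)dx)`.
The shifted path `η(·−ε)` is extended by `0` to the left of `−T`. -/
theorem stmt18 (T : ℝ) (hT : 0 < T) (N : ℕ)
    (Ψ dtΨ : ℝ → (Fin N → ℝ) → ℝ) (DΨ : ℝ → (Fin N → ℝ) → Fin N → ℝ)
    (D2Ψ : ℝ → (Fin N → ℝ) → Fin N → Fin N → ℝ)
    (hΨc : Continuous fun p : ℝ × (Fin N → ℝ) => Ψ p.1 p.2)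
    (hdt : ∀ τ x, HasDerivAt (fun s => Ψ s x) (dtΨ τ x) τ)
    (hdtc : Continuous fun p : ℝ × (Fin N → ℝ) => dtΨ p.1 p.2)
    (hDΨ : ∀ τ x i, HasDerivAt (fun s => Ψ τ (Function.update x i s)) (DΨ τ x i) (x i))
    (hDΨc : ∀ i, Continuous fun p : ℝ × (Fin N → ℝ) => DΨ p.1 p.2 i)
    (hD2Ψ : ∀ τ x i j,
      HasDerivAt (fun s => DΨ τ (Function.update x j s) i) (D2Ψ τ x i j) (x j))
    (hD2Ψc : ∀ i j, Continuous fun p : ℝ × (Fin N → ℝ) => D2Ψ p.1 p.2 i j)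
    (φ φ' φ'' : Fin N → ℝ → ℝ)
    (hφ : ∀ i, ∀ x ∈ Set.Icc (0:ℝ) T, HasDerivWithinAt (φ i) (φ' i x) (Set.Icc 0 T) x)
    (hφ' : ∀ i, ∀ x ∈ Set.Icc (0:ℝ) T, HasDerivWithinAt (φ' i) (φ'' i x) (Set.Icc 0 T) x)
    (hφ'' : ∀ i, ContinuousOn (φ'' i) (Set.Icc 0 T)) :
    ∀ t ∈ Set.Ico (0:ℝ) T, ∀ η : ℝ → ℝ, ContinuousOn η (Set.Icc (-T) 0) →
      Tendsto (fun ε : ℝ =>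
          (Ψ t (fun i => η 0 * φ i t - ∫ x in (-t)..0, η x * φ' i (x + t)) -
            Ψ t (fun i => η 0 * φ i t -
              ∫ x in (-t)..0, (if x - ε < -T then 0 else η (x - ε)) * φ' i (x + t))) / ε)
        (𝓝[>] 0)
        (𝓝 (-∑ i : Fin N,
          DΨ t (fun j => η 0 * φ j t - ∫ x in (-t)..0, η x * φ' j (x + t)) i *
            (η 0 * φ' i t - η (-t) * φ' i 0 -
              ∫ x in (-t)..0, η x * φ'' i (x + t)))) :=
  stmt18_general T N Ψ DΨ hDΨ hDΨc φ φ' φ'' hφ' hφ''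
end
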